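/- arXiv:1801.08407 — 4 statements merged into one kernel-verified Lean document; each statement's English description precedes it below -/
import Mathlib

section
/- Let η ≥ 2 and (δT,δX) ∈ ℤ×ℕ with δ := δT+η·δX ≥ 0. If max(δ/(η+1), δT) < q ≤ δ, then the minimum distance of C_η(δT,δX) equals d_η(δT,δX) = q − ⌊(δ−q)/η⌋. -/
/-!
Write a polynomial of bidegree `(δT, δX)` as `∑ j, γ_j(T1, T2) X1^(δX-j) X2^j` with `γ_j` a form
of degree `δ - η j`, and read a codeword on the `q + 1` columns `T2/T1 = a`, `a ∈ ℙ¹(F)`. On each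
column it is a polynomial in `b = X2/X1` which, after folding the exponent `j + (q - 1)` onto `j`
(`b^q = b`), has degree `< q`. The `j`-th coefficient of that polynomial, as a function of the
column, comes from `γ_j` and `γ_(j+q-1)`; it vanishes on every zero column, so if `s` columns
are nonzero it is identically zero unless `η j ≤ δ - q - 1 + s`. Hence each nonzero column has
at least `q - ⌊(δ - q - 1 + s)/η⌋` nonzero entries, and for `η ≥ 2` the product of this with `s`
is at least `q - ⌊(δ - q)/η⌋`. If all columns vanish the codeword lives on `X1 = 0`, where
`δT < q` makes it heavy enough. The bound is attained by a codeword supported on the column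
`a = 0`, where it is `∏_{c ∈ B} (b - c)` with `#B = ⌊(δ - q)/η⌋`.
-/

open MvPolynomial

attribute [local instance] Classical.propDecidable

namespace Hirz

/-- Index type for the `(q+1)²` rational points of the Hirzebruch surface. -/
abbrev HIdx (F : Type) := (F × F) ⊕ F ⊕ F ⊕ Unit

variable (F : Type) [Field F] [Fintype F]

/-- The homogeneous coordinates of the rational points of `H_η`. -/
def pt : HIdx F → Fin 4 → F
  | Sum.inl (a, b) => ![1, a, 1, b]
  | Sum.inr (Sum.inl b) => ![0, 1, 1, b]
  | Sum.inr (Sum.inr (Sum.inl a)) => ![1, a, 0, 1]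
  | Sum.inr (Sum.inr (Sum.inr _)) => ![0, 1, 0, 1]

/-- Evaluation of a polynomial at all the rational points. -/
noncomputable def ev (P : MvPolynomial (Fin 4) F) : HIdx F → F :=
  fun i => eval (pt F i) P

/-- `c` is the exponent vector (T1,T2,X1,X2) of a monomial of bidegree `(δT, δX)`. -/
def IsBideg (η : ℕ) (δT : ℤ) (δX : ℕ) (c : Fin 4 → ℕ) : Prop :=
  (c 0 : ℤ) + (c 1 : ℤ) - (η : ℤ) * (c 2 : ℤ) = δT ∧ c 2 + c 3 = δX

/-- The monomial with exponent vector `c`. -/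
noncomputable def mon (c : Fin 4 → ℕ) : MvPolynomial (Fin 4) F :=
  monomial (Finsupp.equivFunOnFinite.symm c) (1 : F)

/-- The set of monomials of bidegree `(δT, δX)`. -/
def MSet (η : ℕ) (δT : ℤ) (δX : ℕ) : Set (MvPolynomial (Fin 4) F) :=
  {P | ∃ c : Fin 4 → ℕ, IsBideg η δT δX c ∧ P = mon F c}

/-- `R(δT,δX)`, the space of homogeneous polynomials of bidegree `(δT,δX)`. -/
noncomputable def RSpan (η : ℕ) (δT : ℤ) (δX : ℕ) : Submodule F (MvPolynomial (Fin 4) F) :=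
  Submodule.span F (MSet F η δT δX)

/-- The code `C_η(δT,δX)`, image of `R(δT,δX)` under evaluation. -/
noncomputable def Code (η : ℕ) (δT : ℤ) (δX : ℕ) : Submodule F (HIdx F → F) :=
  Submodule.span F (ev F '' MSet F η δT δX)

/-- Hamming weight. -/
noncomputable def wt (v : HIdx F → F) : ℕ := {i | v i ≠ 0}.ncard

/-- Minimum distance of `C_η(δT,δX)`. -/
noncomputable def dmin (η : ℕ) (δT : ℤ) (δX : ℕ) : ℕ :=
  sInf {w : ℕ | ∃ v ∈ Code F η δT δX, v ≠ 0 ∧ wt F v = w}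

/-- `⌊A⌋` where `A = δX` if `δT ≥ 0` and `A = δ/η` otherwise. -/
def Afloor (η : ℕ) (δT : ℤ) (δX : ℕ) : ℤ :=
  if 0 ≤ δT then (δX : ℤ) else (δT + (η : ℤ) * (δX : ℤ)) / (η : ℤ)

/-- Exponent vector of the monomial `M(d2,c2)`. -/
def Mexp (η : ℕ) (δT : ℤ) (δX : ℕ) (d2 c2 : ℕ) : Fin 4 → ℕ :=
  ![(δT + (η : ℤ) * ((δX : ℤ) - (d2 : ℤ)) - (c2 : ℤ)).toNat, c2, δX - d2, d2]

/-- The monomial `M(d2,c2) = T1^(δT+η(δX-d2)-c2) T2^c2 X1^(δX-d2) X2^d2`. -/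
noncomputable def Mmon (η : ℕ) (δT : ℤ) (δX : ℕ) (d2 c2 : ℕ) : MvPolynomial (Fin 4) F :=
  mon F (Mexp η δT δX d2 c2)

/-- The lattice polygon `P(δT,δX)`. -/
def PSet (η : ℕ) (δT : ℤ) (δX : ℕ) : Set (ℕ × ℕ) :=
  {p | (p.1 : ℤ) ≤ Afloor η δT δX ∧ (p.2 : ℤ) ≤ δT + (η : ℤ) * ((δX : ℤ) - (p.1 : ℤ))}

/-- The set `A_X = {α : α ≤ min(⌊A⌋, q-1)} ∪ ({A} ∩ ℕ)`. -/
def AX (η : ℕ) (δT : ℤ) (δX : ℕ) (q : ℕ) : Set ℕ :=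
  {α | (α : ℤ) ≤ min (Afloor η δT δX) ((q : ℤ) - 1)} ∪
    {α | if 0 ≤ δT then (α : ℤ) = (δX : ℤ)
         else (α : ℤ) * (η : ℤ) = δT + (η : ℤ) * (δX : ℤ)}

/-- The set of representatives `K(δT,δX)`. -/
def KSet (η : ℕ) (δT : ℤ) (δX : ℕ) (q : ℕ) : Set (ℕ × ℕ) :=
  {p | p.1 ∈ AX η δT δX q ∧
    ((p.2 : ℤ) ≤ min (δT + (η : ℤ) * (δX : ℤ) - (η : ℤ) * (p.1 : ℤ)) (q : ℤ) - 1 ∨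
      (p.2 : ℤ) = δT + (η : ℤ) * (δX : ℤ) - (η : ℤ) * (p.1 : ℤ))}

/-- Condition (H): `η ≥ 2`, `δT < 0`, `η ∣ δT` and `q ≤ δX + δT/η`. -/
def CondH (η : ℕ) (δT : ℤ) (δX : ℕ) (q : ℕ) : Prop :=
  2 ≤ η ∧ δT < 0 ∧ (η : ℤ) ∣ δT ∧ (q : ℤ) ≤ (δX : ℤ) + δT / (η : ℤ)

/-- `K*(δT,δX)`: `K(δT,δX)` minus `(δ/η, 0)` if (H) holds. -/
def KStar (η : ℕ) (δT : ℤ) (δX : ℕ) (q : ℕ) : Set (ℕ × ℕ) :=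
  if CondH η δT δX q then
    KSet η δT δX q \ {(((δT + (η : ℤ) * (δX : ℤ)) / (η : ℤ)).toNat, 0)}
  else KSet η δT δX q

/-- `Δ*(δT,δX) = {M(α,β) : (α,β) ∈ K*(δT,δX)}`. -/
noncomputable def DeltaStar (η : ℕ) (δT : ℤ) (δX : ℕ) (q : ℕ) :
    Set (MvPolynomial (Fin 4) F) :=
  {P | ∃ p ∈ KStar η δT δX q, P = Mmon F η δT δX p.1 p.2}

end Hirz

open scoped Polynomial
open Finset

namespace Hirz

section Fold

variable {R : Type*} [Semiring R]

/-- Coefficients of the reduction modulo `X ^ q - X` of a polynomial of degree `< 2q - 1`: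
the exponent `j + (q - 1)` is folded onto `j` for `j ≥ 1`. -/
def foldSeq {M : Type*} [AddMonoid M] (q : ℕ) (u : ℕ → M) (j : ℕ) : M :=
  u j + if j = 0 then 0 else u (j + (q - 1))

noncomputable def foldPoly (q : ℕ) (p : R[X]) : R[X] :=
  ∑ j ∈ range q, Polynomial.monomial j (foldSeq q p.coeff j)

lemma coeff_foldPoly (q : ℕ) (p : R[X]) (j : ℕ) :
    (foldPoly q p).coeff j = if j < q then foldSeq q p.coeff j else 0 := by
  simp [foldPoly, Polynomial.coeff_monomial]

lemma natDegree_foldPoly_lt {q : ℕ} (hq : 0 < q) (p : R[X]) : (foldPoly q p).natDegree < q := by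
  refine Nat.lt_of_le_sub_one hq (Polynomial.natDegree_le_iff_coeff_eq_zero.2 fun j hj => ?_)
  rw [coeff_foldPoly, if_neg (by omega)]

lemma eval_foldPoly {K : Type*} [Field K] [Fintype K] (p : K[X])
    (hp : p.natDegree < 2 * Fintype.card K - 1) (b : K) :
    (foldPoly (Fintype.card K) p).eval b = p.eval b := by
  obtain ⟨n, hn⟩ : ∃ n, Fintype.card K = n + 1 :=
    ⟨_, (Nat.succ_pred_eq_of_pos Fintype.card_pos).symm⟩
  have hb : b ^ (n + 1) = b := hn ▸ FiniteField.pow_card b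
  rw [Polynomial.eval_eq_sum_range' (n := n + 1 + n) (p := p) (by omega), sum_range_add, foldPoly,
    hn, Polynomial.eval_finsetSum]
  simp only [Polynomial.eval_monomial, foldSeq, add_mul, sum_add_distrib, add_tsub_cancel_right]
  rw [sum_range_succ' (fun j => (if j = 0 then 0 else p.coeff (j + n)) * b ^ j)]
  simp only [Nat.add_eq_zero_iff, one_ne_zero, and_false, if_false, if_true, zero_mul, add_zero]
  congr 1
  refine sum_congr rfl fun j _ => ?_
  rw [show j + 1 + n = n + 1 + j by omega, pow_add b (n + 1) j, hb, pow_succ']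

end Fold

section Counting

variable {F : Type} [Field F]

lemma card_le_natDegree_of_eval_eq_zero {K : Type*} [CommRing K] [IsDomain K] {p : K[X]}
    (hp : p ≠ 0) {s : Finset K} (hs : ∀ x ∈ s, p.eval x = 0) : #s ≤ p.natDegree :=
  Polynomial.card_le_degree_of_subset_roots fun x hx =>
    (Polynomial.mem_roots hp).2 (hs x hx)

lemma card_sub_natDegree_le_card_eval_ne_zero {K : Type*} [Field K] [Fintype K] {p : K[X]}
    (hp : p ≠ 0) : Fintype.card K - p.natDegree ≤ #{x | p.eval x ≠ 0} := by
  have hroots := card_le_natDegree_of_eval_eq_zero hp (s := {x | p.eval x = 0}) (by simp)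
  have hsplit := card_filter_add_card_filter_not (s := univ) (p := fun x : K => p.eval x = 0)
  rw [card_univ] at hsplit
  simp only [ne_eq]
  omega

lemma card_filter_option {α : Type*} [Fintype α] (p : Option α → Prop) [DecidablePred p] :
    #{c | p c} = #{a | p (some a)} + if p none then 1 else 0 := by
  simp only [card_filter, Fintype.sum_option]
  ring

lemma card_filter_le_wt [Fintype F] {α : Type*} [Fintype α] {f : α → HIdx F}
    (hf : f.Injective) (v : HIdx F → F) : #{x | v (f x) ≠ 0} ≤ wt F v := by
  rw [← Set.ncard_coe_finset]
  refine Set.ncard_le_ncard_of_injOn f (fun x hx => by simpa using hx) hf.injOn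
    (Set.toFinite _)

end Counting

section Family

variable (F : Type) [Field F] (η : ℕ) (δT : ℤ) (δX : ℕ)

/-- The `T`-degree `δ - η j` of the monomials of bidegree `(δT, δX)` with `X2`-exponent `j`. -/
def tDeg (j : ℕ) : ℤ := δT + η * ((δX : ℤ) - j)

noncomputable def degBound (j : ℕ) : WithBot ℕ :=
  if j ≤ δX ∧ 0 ≤ tDeg η δT δX j then ((tDeg η δT δX j).toNat : ℕ) else ⊥

/-- A polynomial of bidegree `(δT, δX)` is `∑ j, γ_j(T1, T2) X1^(δX-j) X2^j` with `γ_j` a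
form of degree `tDeg j`; a family `γ` in this submodule records the dehomogenisations
`γ_j(1, Y)`. -/
noncomputable def admissible : Submodule F (ℕ → F[X]) :=
  Submodule.pi Set.univ fun j => Polynomial.degreeLE F (degBound η δT δX j)

variable {F η δT δX}

lemma mem_admissible_iff {γ : ℕ → F[X]} : γ ∈ admissible F η δT δX ↔
    ∀ j, γ j ≠ 0 → j ≤ δX ∧ ((γ j).natDegree : ℤ) ≤ tDeg η δT δX j := by
  simp only [admissible, Submodule.mem_pi, Set.mem_univ, true_implies, Polynomial.mem_degreeLE]
  refine forall_congr' fun j => ?_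
  unfold degBound
  split_ifs with hb
  · rw [← Polynomial.natDegree_le_iff_degree_le]
    refine ⟨fun h _ => ⟨hb.1, by omega⟩, fun h => ?_⟩
    by_cases h0 : γ j = 0
    · simp [h0]
    · have := (h h0).2
      omega
  · rw [le_bot_iff, Polynomial.degree_eq_bot]
    refine ⟨fun h h' => absurd h h', fun h => by_contra fun h0 => ?_⟩
    obtain ⟨h1, h2⟩ := h h0
    exact hb ⟨h1, (Nat.cast_nonneg _).trans h2⟩

lemma tDeg_nonneg_of_ne_zero {γ : ℕ → F[X]} (hγ : γ ∈ admissible F η δT δX) {j : ℕ}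
    (hj : γ j ≠ 0) : 0 ≤ tDeg η δT δX j :=
  (Nat.cast_nonneg _).trans (mem_admissible_iff.1 hγ _ hj).2

variable (F η δT δX)

/-- The coefficient of `b ^ j` in column `c`; the column `none` at infinity sees the leading
coefficients of the forms `γ_j`. -/
noncomputable def colCoeff (γ : ℕ → F[X]) : Option F → ℕ → F
  | some a, j => (γ j).eval a
  | none, j => (γ j).coeff (tDeg η δT δX j).toNat

noncomputable def evFam : (ℕ → F[X]) →ₗ[F] HIdx F → F where
  toFun γ
    | Sum.inl (a, b) => ∑ j ∈ range (δX + 1), colCoeff F η δT δX γ (some a) j * b ^ j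
    | Sum.inr (Sum.inl b) => ∑ j ∈ range (δX + 1), colCoeff F η δT δX γ none j * b ^ j
    | Sum.inr (Sum.inr (Sum.inl a)) => colCoeff F η δT δX γ (some a) δX
    | Sum.inr (Sum.inr (Sum.inr _)) => colCoeff F η δT δX γ none δX
  map_add' γ γ' := by
    funext i
    rcases i with ⟨a, b⟩ | b | a | u <;>
      simp [colCoeff, add_mul, sum_add_distrib]
  map_smul' r γ := by
    funext i
    rcases i with ⟨a, b⟩ | b | a | u <;>
      simp [colCoeff, mul_sum, mul_assoc]

variable {F η δT δX}

lemma colCoeff_eq_zero {γ : ℕ → F[X]} {j : ℕ} (hj : γ j = 0) (c : Option F) :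
    colCoeff F η δT δX γ c j = 0 := by
  cases c <;> simp [colCoeff, hj]

end Family

section Characterization

variable {F : Type} [Field F] {η : ℕ} {δT : ℤ} {δX : ℕ}

lemma ev_mon (c : Fin 4 → ℕ) (x : HIdx F) :
    ev F (mon F c) x = ∏ k : Fin 4, pt F x k ^ c k := by
  rw [ev, mon, eval_monomial, Finsupp.prod_fintype _ _ fun _ => pow_zero _]
  simp

lemma tDeg_of_isBideg {c : Fin 4 → ℕ} (hc : IsBideg η δT δX c) :
    tDeg η δT δX (c 3) = c 0 + c 1 := by
  obtain ⟨h1, h2⟩ := hc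
  rw [tDeg, ← h2]
  push_cast
  linarith

lemma ev_mon_eq_evFam {c : Fin 4 → ℕ} (hc : IsBideg η δT δX c) :
    ev F (mon F c) = evFam F η δT δX (Pi.single (c 3) (Polynomial.X ^ c 1)) := by
  have htop : (tDeg η δT δX (c 3)).toNat = c 0 + c 1 := by rw [tDeg_of_isBideg hc]; omega
  obtain ⟨-, rfl⟩ := hc
  have hsum : ∀ (c' : Option F) (b : F), ∑ j ∈ range (c 2 + c 3 + 1),
      colCoeff F η δT (c 2 + c 3) (Pi.single (c 3) (Polynomial.X ^ c 1)) c' j * b ^ j =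
      colCoeff F η δT (c 2 + c 3) (Pi.single (c 3) (Polynomial.X ^ c 1)) c' (c 3) * b ^ c 3 :=
    fun c' b => sum_eq_single_of_mem _ (mem_range.2 (by omega)) fun j _ hj => by
      rw [colCoeff_eq_zero (Pi.single_eq_of_ne hj _), zero_mul]
  funext x
  rcases x with ⟨a, b⟩ | b | a | u <;>
    simp only [evFam, LinearMap.coe_mk, AddHom.coe_mk, hsum] <;>
    simp only [ev_mon, colCoeff, Fin.prod_univ_four, pt] <;>
    by_cases h0 : c 0 = 0 <;> by_cases h2 : c 2 = 0 <;>
    simp_all [Polynomial.coeff_X_pow]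

lemma single_X_pow_mem_admissible {j i : ℕ} (hj : j ≤ δX)
    (hi : (i : ℤ) ≤ tDeg η δT δX j) :
    Pi.single j (Polynomial.X ^ i) ∈ admissible F η δT δX := by
  refine mem_admissible_iff.2 fun j' h => ?_
  rcases eq_or_ne j' j with rfl | hj'
  · simpa using ⟨hj, hi⟩
  · exact absurd (Pi.single_eq_of_ne hj' _) h

lemma isBideg_Mexp {j i : ℕ} (hj : j ≤ δX) (hi : (i : ℤ) ≤ tDeg η δT δX j) :
    IsBideg η δT δX (Mexp η δT δX j i) := by
  refine ⟨?_, by simp [Mexp]; omega⟩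
  simp only [Mexp, tDeg] at hi ⊢
  simp only [Matrix.cons_val, Nat.cast_sub hj]
  rw [Int.toNat_of_nonneg (by linarith)]
  ring

lemma eq_sum_single_X_pow {γ : ℕ → F[X]} (hγ : γ ∈ admissible F η δT δX) :
    γ = ∑ j ∈ range (δX + 1), ∑ i ∈ range ((tDeg η δT δX j).toNat + 1),
      (γ j).coeff i • Pi.single j (Polynomial.X ^ i) := by
  funext j'
  simp only [Finset.sum_apply, Pi.smul_apply, Pi.single_apply, smul_ite, smul_zero,
    ← ite_sum_zero, sum_ite_eq, mem_range, Polynomial.smul_X_eq_monomial]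
  by_cases hj : γ j' = 0
  · simp [hj]
  obtain ⟨hjX, hdeg⟩ := mem_admissible_iff.1 hγ _ hj
  rw [if_pos (by omega), ← Polynomial.as_sum_range' _ _ (by omega)]

theorem code_eq_map_admissible :
    Code F η δT δX = (admissible F η δT δX).map (evFam F η δT δX) := by
  apply le_antisymm
  · refine Submodule.span_le.2 ?_
    rintro _ ⟨_, ⟨c, hc, rfl⟩, rfl⟩
    refine ⟨_, single_X_pow_mem_admissible (hc.2 ▸ Nat.le_add_left _ _) ?_,
      (ev_mon_eq_evFam hc).symm⟩
    rw [tDeg_of_isBideg hc]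
    omega
  · rintro _ ⟨γ, hγ, rfl⟩
    rw [eq_sum_single_X_pow hγ, map_sum]
    refine Submodule.sum_mem _ fun j hj => ?_
    rw [map_sum]
    refine Submodule.sum_mem _ fun i _ => ?_
    rw [map_smul]
    by_cases h : (γ j).coeff i = 0
    · rw [h, zero_smul]
      exact Submodule.zero_mem _
    have hγj : γ j ≠ 0 := fun h0 => h (by simp [h0])
    have hi : (i : ℤ) ≤ tDeg η δT δX j :=
      le_trans (by exact_mod_cast Polynomial.le_natDegree_of_ne_zero h)
        (mem_admissible_iff.1 hγ _ hγj).2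
    have hc := isBideg_Mexp (mem_admissible_iff.1 hγ _ hγj).1 hi
    exact Submodule.smul_mem _ _
      (Submodule.subset_span ⟨_, ⟨_, hc, rfl⟩, ev_mon_eq_evFam hc⟩)

end Characterization

section Columns

/-- The point in row `b` of column `c`, the column `none` being the line `T1 = 0`. -/
def colPt (F : Type) : Option F × F → HIdx F
  | (some a, b) => Sum.inl (a, b)
  | (none, b) => Sum.inr (Sum.inl b)

lemma colPt_injective {F : Type} : (colPt F).Injective := by
  rintro ⟨_ | a, b⟩ ⟨_ | a', b'⟩ h <;> simp_all [colPt]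

variable {F : Type} [Field F] {η : ℕ} {δT : ℤ} {δX : ℕ}

lemma tDeg_add (j k : ℕ) : tDeg η δT δX (j + k) = tDeg η δT δX j - η * k := by
  simp only [tDeg]
  push_cast
  ring

variable (η δT δX) in
noncomputable def colPoly (γ : ℕ → F[X]) (c : Option F) : F[X] :=
  ∑ j ∈ range (δX + 1), Polynomial.monomial j (colCoeff F η δT δX γ c j)

lemma evFam_colPt (γ : ℕ → F[X]) (c : Option F) (b : F) :
    evFam F η δT δX γ (colPt F (c, b)) = (colPoly η δT δX γ c).eval b := by
  cases c <;> simp [evFam, colPt, colPoly, Polynomial.eval_finsetSum]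

lemma coeff_colPoly {γ : ℕ → F[X]} (hγ : γ ∈ admissible F η δT δX) (c : Option F)
    (j : ℕ) : (colPoly η δT δX γ c).coeff j = colCoeff F η δT δX γ c j := by
  simp only [colPoly, Polynomial.finsetSum_coeff, Polynomial.coeff_monomial, sum_ite_eq',
    mem_range]
  split_ifs with hj
  · rfl
  · by_contra h
    exact hj (Nat.lt_succ_of_le
      (mem_admissible_iff.1 hγ _ fun h0 => h (colCoeff_eq_zero h0 c).symm).1)

lemma colCoeff_eq_zero_of_tDeg_lt {γ : ℕ → F[X]} (hγ : γ ∈ admissible F η δT δX)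
    {j : ℕ} (hj : tDeg η δT δX j < 0) (c : Option F) : colCoeff F η δT δX γ c j = 0 :=
  colCoeff_eq_zero (by_contra fun h => (tDeg_nonneg_of_ne_zero hγ h).not_gt hj) c

lemma foldSeq_colCoeff_some (q : ℕ) (γ : ℕ → F[X]) (a : F) (j : ℕ) :
    foldSeq q (colCoeff F η δT δX γ (some a)) j = (foldSeq q γ j).eval a := by
  simp only [foldSeq, colCoeff]
  split_ifs <;> simp

variable [Fintype F]

lemma natDegree_colPoly_lt {γ : ℕ → F[X]} (hγ : γ ∈ admissible F η δT δX)
    (hη : 2 ≤ η) (hδ : δT + η * δX < (η + 1) * Fintype.card F) (c : Option F) :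
    (colPoly η δT δX γ c).natDegree < 2 * Fintype.card F - 1 := by
  have hq : 2 ≤ Fintype.card F := Fintype.one_lt_card
  refine Nat.lt_of_le_sub_one (by omega)
    (Polynomial.natDegree_le_iff_coeff_eq_zero.2 fun j hj => ?_)
  rw [coeff_colPoly hγ]
  refine colCoeff_eq_zero_of_tDeg_lt hγ ?_ c
  have hj' : 2 * (Fintype.card F : ℤ) - 1 ≤ j := by omega
  have hη' : (2 : ℤ) ≤ η := by exact_mod_cast hη
  have hq' : (2 : ℤ) ≤ Fintype.card F := by exact_mod_cast hq
  simp only [tDeg]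
  nlinarith

variable (η δT δX) in
/-- Column `c` of the codeword, as a polynomial in the row coordinate of degree `< q`. -/
noncomputable def colRed (γ : ℕ → F[X]) (c : Option F) : F[X] :=
  foldPoly (Fintype.card F) (colPoly η δT δX γ c)

lemma evFam_colPt_eq_eval_colRed {γ : ℕ → F[X]} (hγ : γ ∈ admissible F η δT δX)
    (hη : 2 ≤ η) (hδ : δT + η * δX < (η + 1) * Fintype.card F) (c : Option F) (b : F) :
    evFam F η δT δX γ (colPt F (c, b)) = (colRed η δT δX γ c).eval b := by
  rw [evFam_colPt, colRed, eval_foldPoly _ (natDegree_colPoly_lt hγ hη hδ c)]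

lemma coeff_colRed {γ : ℕ → F[X]} (hγ : γ ∈ admissible F η δT δX) (c : Option F)
    {j : ℕ} (hj : j < Fintype.card F) :
    (colRed η δT δX γ c).coeff j = foldSeq (Fintype.card F) (colCoeff F η δT δX γ c) j := by
  rw [colRed, coeff_foldPoly, if_pos hj]
  simp only [foldSeq, coeff_colPoly hγ]

end Columns

section ZeroColumns

variable {F : Type} [Field F] {η : ℕ} {δT : ℤ} {δX : ℕ} {γ : ℕ → F[X]}

lemma natDegree_le_tDeg_of_le (hγ : γ ∈ admissible F η δT δX) {j k : ℕ} (hjk : j ≤ k)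
    (hk : γ k ≠ 0) : ((γ k).natDegree : ℤ) ≤ tDeg η δT δX j := by
  obtain ⟨d, rfl⟩ := Nat.exists_eq_add_of_le hjk
  have h := (mem_admissible_iff.1 hγ _ hk).2
  rw [tDeg_add] at h
  nlinarith [Int.natCast_nonneg d, Int.natCast_nonneg η]

lemma natDegree_foldSeq_le (hγ : γ ∈ admissible F η δT δX) {q j : ℕ}
    (h : foldSeq q γ j ≠ 0) : ((foldSeq q γ j).natDegree : ℤ) ≤ tDeg η δT δX j := by
  have hle := fun k => natDegree_le_tDeg_of_le hγ (j := j) (k := k)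
  unfold foldSeq at h ⊢
  split_ifs at h ⊢
  · rw [add_zero] at h ⊢
    exact hle _ le_rfl h
  rcases eq_or_ne (γ j) 0 with h1 | h1
  · rw [h1, zero_add] at h ⊢
    exact hle _ (Nat.le_add_right _ _) h
  rcases eq_or_ne (γ (j + (q - 1))) 0 with h2 | h2
  · rw [h2, add_zero]
    exact hle _ le_rfl h1
  refine le_trans (Nat.cast_le.2 (Polynomial.natDegree_add_le _ _)) ?_
  rw [Nat.cast_max]
  exact max_le (hle _ le_rfl h1) (hle _ (Nat.le_add_right _ _) h2)

/-- The leading coefficient in degree `tDeg j` only sees `γ j`, since `tDeg` decreases. -/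
lemma coeff_foldSeq_tDeg (hγ : γ ∈ admissible F η δT δX) (hη : 1 ≤ η) {q : ℕ}
    (hq : 2 ≤ q) (j : ℕ) :
    (foldSeq q γ j).coeff (tDeg η δT δX j).toNat = colCoeff F η δT δX γ none j := by
  simp only [foldSeq, Polynomial.coeff_add, colCoeff]
  split_ifs with hj
  · simp
  rw [add_eq_left]
  by_cases h : γ (j + (q - 1)) = 0
  · simp [h]
  refine Polynomial.coeff_eq_zero_of_natDegree_lt ?_
  have hdeg := (mem_admissible_iff.1 hγ _ h).2
  rw [tDeg_add] at hdeg
  have : (1 : ℤ) ≤ η * (q - 1 : ℕ) :=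
    one_le_mul_of_one_le_of_one_le (by exact_mod_cast hη)
      (by exact_mod_cast (by omega : 1 ≤ q - 1))
  omega

lemma le_tDeg_of_colCoeff_ne_zero (hγ : γ ∈ admissible F η δT δX) {j k : ℕ}
    (h : colCoeff F η δT δX γ none (j + k) ≠ 0) : η * (k : ℤ) ≤ tDeg η δT δX j := by
  have h0 := tDeg_nonneg_of_ne_zero hγ fun h0 => h (colCoeff_eq_zero h0 none)
  rw [tDeg_add] at h0
  linarith

variable [Fintype F]

/-- A column whose `j`-th coefficient is not zero forces `tDeg j` to be at least the number of
zero columns: on the affine columns that coefficient is a polynomial of degree `≤ tDeg j` in the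
column coordinate, and the column at infinity reads off its coefficient of degree `tDeg j`. -/
lemma card_zero_colRed_le_tDeg (hγ : γ ∈ admissible F η δT δX) (hη : 2 ≤ η) {j : ℕ}
    (hj : j < Fintype.card F) {c₀ : Option F}
    (hc₀ : (colRed η δT δX γ c₀).coeff j ≠ 0) :
    (#{c | colRed η δT δX γ c = 0} : ℤ) ≤ tDeg η δT δX j := by
  have hq : 2 ≤ Fintype.card F := Fintype.one_lt_card
  set g := foldSeq (Fintype.card F) γ j
  have hsome : ∀ a, (colRed η δT δX γ (some a)).coeff j = g.eval a := fun a => by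
    rw [coeff_colRed hγ _ hj, foldSeq_colCoeff_some]
  have hcount := card_filter_option (fun c => colRed η δT δX γ c = 0)
  have hle_q : #{c | colRed η δT δX γ c = 0} ≤ Fintype.card F := by
    have : #{c | colRed η δT δX γ c = 0} < #(univ : Finset (Option F)) :=
      card_lt_card (filter_ssubset.2
        ⟨c₀, mem_univ _, fun h => hc₀ (by rw [h, Polynomial.coeff_zero])⟩)
    rwa [card_univ, Fintype.card_option, Nat.lt_succ_iff] at this
  by_cases hfar : j ≠ 0 ∧ colCoeff F η δT δX γ none (j + (Fintype.card F - 1)) ≠ 0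
  · have h := le_tDeg_of_colCoeff_ne_zero hγ hfar.2
    have : (2 : ℤ) * (Fintype.card F - 1 : ℕ) ≤ η * (Fintype.card F - 1 : ℕ) :=
      mul_le_mul_of_nonneg_right (by exact_mod_cast hη) (Nat.cast_nonneg _)
    omega
  have hnone : (colRed η δT δX γ none).coeff j = g.coeff (tDeg η δT δX j).toNat := by
    rw [coeff_colRed hγ _ hj, coeff_foldSeq_tDeg hγ (by omega) hq]
    simp only [foldSeq]
    split_ifs with h0
    · rw [add_zero]
    · rw [not_and_not_right.1 hfar h0, add_zero]
  have hg : g ≠ 0 := by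
    rintro hg0
    cases c₀ with
    | none => exact hc₀ (by rw [hnone, hg0, Polynomial.coeff_zero])
    | some a => exact hc₀ (by rw [hsome, hg0, Polynomial.eval_zero])
  have hdeg : (g.natDegree : ℤ) ≤ tDeg η δT δX j := natDegree_foldSeq_le hγ hg
  have hroots : #{a | colRed η δT δX γ (some a) = 0} ≤ g.natDegree :=
    card_le_natDegree_of_eval_eq_zero hg fun a ha => by
      rw [← hsome, (mem_filter.1 ha).2, Polynomial.coeff_zero]
  rw [hcount] at hle_q ⊢
  split_ifs at hle_q ⊢ with hinf
  · have htop : g.natDegree ≠ (tDeg η δT δX j).toNat := fun h => hg <|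
      Polynomial.leadingCoeff_eq_zero.1 (by
        rw [Polynomial.leadingCoeff, h, ← hnone, hinf, Polynomial.coeff_zero])
    push_cast
    omega
  · push_cast
    omega

end ZeroColumns

lemma sub_ediv_le_mul_sub {q η δ s D : ℤ} (hη : 2 ≤ η) (hs : 1 ≤ s)
    (hDq : D ≤ q - 1) (hD : η * D ≤ δ - q - 1 + s) : q - (δ - q) / η ≤ s * (q - D) := by
  set m := (δ - q) / η
  have hm : η * m ≤ δ - q := Int.mul_ediv_self_le (by omega)
  have hm' : δ - q < η * m + η := by
    have := Int.emod_lt_of_pos (δ - q) (by omega : 0 < η)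
    have := Int.mul_ediv_add_emod (δ - q) η
    linarith
  rcases le_or_gt (q - m) s with hbig | hsmall
  · nlinarith
  rcases le_or_gt D m with hDm | hDm
  · nlinarith
  have h2 : 2 * (D - m) ≤ s := by nlinarith
  nlinarith

section LowerBound

variable {F : Type} [Field F] [Fintype F] {η : ℕ} {δT : ℤ} {δX : ℕ} {γ : ℕ → F[X]}

lemma sum_card_col_le_wt (v : HIdx F → F) :
    ∑ c : Option F, #{b | v (colPt F (c, b)) ≠ 0} ≤ wt F v := by
  refine le_trans (le_of_eq ?_) (card_filter_le_wt colPt_injective v)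
  simp only [card_filter, Fintype.sum_prod_type]

lemma natDegree_colRed_le (hγ : γ ∈ admissible F η δT δX) (hη : 2 ≤ η) {c : Option F}
    (hc : colRed η δT δX γ c ≠ 0) :
    η * ((colRed η δT δX γ c).natDegree : ℤ) ≤
      δT + η * δX - #{c | colRed η δT δX γ c = 0} := by
  have h := card_zero_colRed_le_tDeg hγ hη (j := (colRed η δT δX γ c).natDegree)
    (natDegree_foldPoly_lt Fintype.card_pos _)
    (Polynomial.leadingCoeff_ne_zero.2 hc)
  simp only [tDeg] at h
  linarith

lemma le_wt_of_exists_colRed_ne_zero (hγ : γ ∈ admissible F η δT δX) (hη : 2 ≤ η)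
    (hδ : δT + η * δX < (η + 1) * Fintype.card F) (hc : ∃ c, colRed η δT δX γ c ≠ 0) :
    (Fintype.card F : ℤ) - (δT + η * δX - Fintype.card F) / η ≤
      wt F (evFam F η δT δX γ) := by
  set q := Fintype.card F
  set s := #{c | colRed η δT δX γ c ≠ 0}
  have hsplit : #{c | colRed η δT δX γ c = 0} + s = q + 1 := by
    rw [card_filter_add_card_filter_not, card_univ, Fintype.card_option]
  obtain ⟨c₀, hc₀⟩ := hc
  have hs : 1 ≤ s := card_pos.2 ⟨c₀, mem_filter.2 ⟨mem_univ _, hc₀⟩⟩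
  set D := min ((q : ℤ) - 1) ((δT + η * δX - q - 1 + s) / η)
  have hcol : ∀ c, colRed η δT δX γ c ≠ 0 →
      (q : ℤ) - D ≤ #{b | (colRed η δT δX γ c).eval b ≠ 0} := by
    intro c hc
    have hdeg := natDegree_colRed_le hγ hη hc
    have hdegq : (colRed η δT δX γ c).natDegree < q :=
      natDegree_foldPoly_lt Fintype.card_pos _
    have hdegD : ((colRed η δT δX γ c).natDegree : ℤ) ≤ D :=
      le_min (by omega) ((Int.le_ediv_iff_mul_le (by omega)).2 (by linarith))
    have := card_sub_natDegree_le_card_eval_ne_zero hc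
    omega
  calc (q : ℤ) - (δT + η * δX - q) / η ≤ s * (q - D) :=
        sub_ediv_le_mul_sub (by exact_mod_cast hη) (by exact_mod_cast hs) (min_le_left _ _)
          ((Int.mul_ediv_self_le (by omega)).trans'
            (mul_le_mul_of_nonneg_left (min_le_right _ _) (by positivity)))
    _ = ∑ c, if colRed η δT δX γ c ≠ 0 then ((q : ℤ) - D) else 0 := by
        rw [sum_ite, sum_const_zero, add_zero, sum_const, nsmul_eq_mul]
    _ ≤ ∑ c : Option F, (#{b | (colRed η δT δX γ c).eval b ≠ 0} : ℤ) := by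
        refine sum_le_sum fun c _ => ?_
        split_ifs with hc
        · exact hcol c hc
        · exact Nat.cast_nonneg _
    _ ≤ wt F (evFam F η δT δX γ) := by
        simp only [← evFam_colPt_eq_eval_colRed hγ hη hδ]
        exact_mod_cast sum_card_col_le_wt _

lemma evFam_eq_zero_of_forall_colRed_eq_zero (hγ : γ ∈ admissible F η δT δX) (hη : 2 ≤ η)
    (hδ : δT + η * δX < (η + 1) * Fintype.card F) (hzero : ∀ c, colRed η δT δX γ c = 0)
    (hδX : γ δX = 0) : evFam F η δT δX γ = 0 := by
  have hcol := fun c b => (evFam_colPt_eq_eval_colRed hγ hη hδ c b).trans (by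
    rw [hzero, Polynomial.eval_zero])
  funext i
  rcases i with ⟨a, b⟩ | b | a | u
  · exact hcol (some a) b
  · exact hcol none b
  · exact colCoeff_eq_zero (η := η) (δT := δT) (δX := δX) hδX (some a)
  · exact colCoeff_eq_zero (η := η) (δT := δT) (δX := δX) hδX none

/-- When every column vanishes the codeword lives on the line `X1 = 0`, where it is the
polynomial `γ δX` of degree `≤ δT`; that `γ δX` does not vanish on all of `F` forces
`q ≤ δX`. -/
lemma le_wt_of_forall_colRed_eq_zero (hγ : γ ∈ admissible F η δT δX) (hη : 2 ≤ η)
    (hδ : δT + η * δX < (η + 1) * Fintype.card F) (hδT : δT < Fintype.card F)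
    (hv : evFam F η δT δX γ ≠ 0) (hzero : ∀ c, colRed η δT δX γ c = 0) :
    (Fintype.card F : ℤ) - (δT + η * δX - Fintype.card F) / η ≤
      wt F (evFam F η δT δX γ) := by
  have hq : 2 ≤ Fintype.card F := Fintype.one_lt_card
  have hγX : γ δX ≠ 0 :=
    fun h => hv (evFam_eq_zero_of_forall_colRed_eq_zero hγ hη hδ hzero h)
  have hdeg : ((γ δX).natDegree : ℤ) ≤ δT := by
    simpa [tDeg] using (mem_admissible_iff.1 hγ _ hγX).2
  have hqX : Fintype.card F ≤ δX := by
    by_contra hlt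
    refine hγX (Polynomial.eq_zero_of_natDegree_lt_card_of_eval_eq_zero _ Function.injective_id
      (fun a => ?_) (by omega))
    have h := coeff_colRed hγ (some a) (j := δX) (by omega)
    rw [hzero, Polynomial.coeff_zero, foldSeq_colCoeff_some, foldSeq] at h
    have hfar : γ (δX + (Fintype.card F - 1)) = 0 := by_contra fun h' => by
      have := (mem_admissible_iff.1 hγ _ h').1
      omega
    simpa [hfar] using h.symm
  have hm : δT ≤ (δT + η * δX - Fintype.card F) / η := by
    rw [Int.le_ediv_iff_mul_le (by omega)]
    have : (η : ℤ) * Fintype.card F ≤ η * δX :=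
      mul_le_mul_of_nonneg_left (by exact_mod_cast hqX) (by positivity)
    nlinarith
  have hrow : #{a | (γ δX).eval a ≠ 0} ≤ wt F (evFam F η δT δX γ) :=
    card_filter_le_wt (f := fun a : F => Sum.inr (Sum.inr (Sum.inl a)))
      (fun a a' h => by simpa using h) (evFam F η δT δX γ)
  have := card_sub_natDegree_le_card_eval_ne_zero hγX
  omega

theorem le_wt_evFam (hγ : γ ∈ admissible F η δT δX) (hη : 2 ≤ η)
    (hδ : δT + η * δX < (η + 1) * Fintype.card F) (hδT : δT < Fintype.card F)
    (hv : evFam F η δT δX γ ≠ 0) :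
    (Fintype.card F : ℤ) - (δT + η * δX - Fintype.card F) / η ≤
      wt F (evFam F η δT δX γ) := by
  by_cases hzero : ∀ c, colRed η δT δX γ c = 0
  · exact le_wt_of_forall_colRed_eq_zero hγ hη hδ hδT hv hzero
  · push Not at hzero
    exact le_wt_of_exists_colRed_ne_zero hγ hη hδ hzero

end LowerBound

section UpperBound

variable {F : Type} [Field F] [Fintype F] {η : ℕ} {δT : ℤ} {δX : ℕ}

noncomputable def upperFamily (B : Finset F) (j : ℕ) : F[X] :=
  Polynomial.C ((∏ c ∈ B, (Polynomial.X - Polynomial.C c)).coeff j) *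
    (Polynomial.X ^ (Fintype.card F - 1) - 1)

lemma natDegree_upperFamily_le (B : Finset F) (j : ℕ) :
    (upperFamily B j).natDegree ≤ Fintype.card F - 1 :=
  (Polynomial.natDegree_C_mul_le _ _).trans <| (Polynomial.natDegree_sub_le _ _).trans <| by simp

lemma upperFamily_eq_zero {B : Finset F} {j : ℕ} (hj : #B < j) : upperFamily B j = 0 := by
  rw [upperFamily, Polynomial.coeff_eq_zero_of_natDegree_lt
    (by rwa [Polynomial.natDegree_finsetProd_X_sub_C_eq_card]), map_zero, zero_mul]

lemma upperFamily_mem_admissible {B : Finset F}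
    (hB : η * (#B : ℤ) ≤ δT + η * δX - Fintype.card F) (hBX : #B < δX) :
    upperFamily B ∈ admissible F η δT δX := by
  refine mem_admissible_iff.2 fun j hj => ?_
  have hjB : j ≤ #B := not_lt.1 fun h => hj (upperFamily_eq_zero h)
  have : (η : ℤ) * j ≤ η * #B :=
    mul_le_mul_of_nonneg_left (by exact_mod_cast hjB) (by positivity)
  have : (upperFamily B j).natDegree ≤ Fintype.card F :=
    (natDegree_upperFamily_le B j).trans (Nat.sub_le _ _)
  refine ⟨by omega, ?_⟩
  rw [tDeg, mul_sub]
  omega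

lemma colCoeff_upperFamily_none {B : Finset F}
    (hB : η * (#B : ℤ) ≤ δT + η * δX - Fintype.card F) (j : ℕ) :
    colCoeff F η δT δX (upperFamily B) none j = 0 := by
  by_cases hjB : #B < j
  · exact colCoeff_eq_zero (upperFamily_eq_zero hjB) none
  have : (η : ℤ) * j ≤ η * #B :=
    mul_le_mul_of_nonneg_left (by exact_mod_cast not_lt.1 hjB) (by positivity)
  have hdeg : (upperFamily B j).natDegree < Fintype.card F :=
    (natDegree_upperFamily_le B j).trans_lt (Nat.sub_lt Fintype.card_pos one_pos)
  have hq : (Fintype.card F : ℤ) ≤ tDeg η δT δX j := by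
    rw [tDeg, mul_sub]
    omega
  show (upperFamily B j).coeff (tDeg η δT δX j).toNat = 0
  exact Polynomial.coeff_eq_zero_of_natDegree_lt (Int.lt_toNat.2 (by omega))

lemma evFam_upperFamily_inl (B : Finset F) (hBX : #B < δX) (a b : F) :
    evFam F η δT δX (upperFamily B) (Sum.inl (a, b)) =
      (a ^ (Fintype.card F - 1) - 1) * ∏ c ∈ B, (b - c) := by
  have hdeg : (∏ c ∈ B, (Polynomial.X - Polynomial.C c)).natDegree < δX + 1 := by
    rw [Polynomial.natDegree_finsetProd_X_sub_C_eq_card]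
    omega
  simp only [evFam, LinearMap.coe_mk, AddHom.coe_mk, colCoeff, upperFamily]
  rw [show ∏ c ∈ B, (b - c) = (∏ c ∈ B, (Polynomial.X - Polynomial.C c)).eval b by
    simp [Polynomial.eval_prod], Polynomial.eval_eq_sum_range' hdeg, mul_sum]
  simp only [Polynomial.eval_mul, Polynomial.eval_C, Polynomial.eval_sub, Polynomial.eval_pow,
    Polynomial.eval_X, Polynomial.eval_one]
  refine sum_congr rfl fun j _ => by ring

lemma evFam_upperFamily_ne_zero_iff {B : Finset F}
    (hB : η * (#B : ℤ) ≤ δT + η * δX - Fintype.card F) (hBX : #B < δX) (i : HIdx F) :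
    evFam F η δT δX (upperFamily B) i ≠ 0 ↔ ∃ b ∉ B, i = Sum.inl (0, b) := by
  have hq : Fintype.card F - 1 ≠ 0 := by have : 2 ≤ Fintype.card F := Fintype.one_lt_card; omega
  have hX :=
    colCoeff_eq_zero (η := η) (δT := δT) (δX := δX) (j := δX) (upperFamily_eq_zero hBX)
  rcases i with ⟨a, b⟩ | b | a | u
  · rw [evFam_upperFamily_inl B hBX]
    by_cases ha : a = 0
    · simp [ha, zero_pow hq, prod_eq_zero_iff, sub_eq_zero]
    · simp [ha, FiniteField.pow_card_sub_one_eq_one a ha]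
  · simp [evFam, colCoeff_upperFamily_none hB]
  · simpa [evFam] using hX (some a)
  · simpa [evFam] using hX none

lemma wt_evFam_upperFamily {B : Finset F}
    (hB : η * (#B : ℤ) ≤ δT + η * δX - Fintype.card F) (hBX : #B < δX) :
    wt F (evFam F η δT δX (upperFamily B)) = Fintype.card F - #B := by
  have hsupp : {i | evFam F η δT δX (upperFamily B) i ≠ 0} =
      (fun b => Sum.inl (0, b)) '' ↑Bᶜ := by
    ext i
    simp [evFam_upperFamily_ne_zero_iff hB hBX, eq_comm]
  rw [wt, hsupp, Set.ncard_image_of_injective _ fun b b' h => by simpa using h,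
    Set.ncard_coe_finset, card_compl]

theorem exists_mem_code_wt_eq (hη : 0 < η) (hδ : δT + η * δX < (η + 1) * Fintype.card F)
    (hδT : δT < Fintype.card F) (hqδ : Fintype.card F ≤ δT + η * δX) :
    ∃ v ∈ Code F η δT δX, v ≠ 0 ∧
      (wt F v : ℤ) = Fintype.card F - (δT + η * δX - Fintype.card F) / η := by
  set m := (δT + η * δX - Fintype.card F) / η
  have hm0 : 0 ≤ m := Int.ediv_nonneg (by omega) (by omega)
  have hm : η * m ≤ δT + η * δX - Fintype.card F := Int.mul_ediv_self_le (by omega)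
  have hmq : m < Fintype.card F := by nlinarith
  have hmX : m < δX := by nlinarith
  obtain ⟨B, -, hB⟩ := (univ : Finset F).exists_subset_card_eq (n := m.toNat)
    (by rw [card_univ]; omega)
  have hBm : (#B : ℤ) = m := by rw [hB, Int.toNat_of_nonneg hm0]
  have hBX : #B < δX := by omega
  have hB' : η * (#B : ℤ) ≤ δT + η * δX - Fintype.card F := hBm ▸ hm
  have hmem : evFam F η δT δX (upperFamily B) ∈ Code F η δT δX := by
    rw [code_eq_map_admissible]
    exact Submodule.mem_map_of_mem (upperFamily_mem_admissible hB' hBX)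
  refine ⟨_, hmem, fun h => ?_, ?_⟩
  · obtain ⟨b, hb⟩ : ∃ b, b ∉ B := by
      by_contra! h
      have := card_le_card (fun b _ => h b : univ ⊆ B)
      rw [card_univ] at this
      omega
    exact (evFam_upperFamily_ne_zero_iff hB' hBX _).2 ⟨b, hb, rfl⟩ (congrFun h _)
  · rw [wt_evFam_upperFamily hB' hBX, Nat.cast_sub (by omega), hBm]

end UpperBound

variable (F : Type) [Field F] [Fintype F]

theorem statement16 (η : ℕ) (δT : ℤ) (δX : ℕ) (hη : 2 ≤ η)
    (hlt : max (((δT + (η : ℤ) * (δX : ℤ) : ℤ) : ℚ) / ((η : ℚ) + 1)) ((δT : ℚ))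
      < (Fintype.card F : ℚ))
    (hle : (Fintype.card F : ℤ) ≤ δT + (η : ℤ) * (δX : ℤ)) :
    (dmin F η δT δX : ℤ) =
      (Fintype.card F : ℤ) -
        (δT + (η : ℤ) * (δX : ℤ) - (Fintype.card F : ℤ)) / (η : ℤ) := by
  have hδ : δT + η * δX < (η + 1) * Fintype.card F := by
    have h := (le_max_left _ _).trans_lt hlt
    rw [div_lt_iff₀ (by positivity)] at h
    push_cast at h
    exact_mod_cast (by linarith : (δT + η * δX : ℚ) < (η + 1) * Fintype.card F)
  have hδT : δT < Fintype.card F := by exact_mod_cast (le_max_right _ _).trans_lt hlt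
  obtain ⟨v, hv, hv0, hwt⟩ := exists_mem_code_wt_eq (by omega) hδ hδT hle
  have hleast : IsLeast {w | ∃ v ∈ Code F η δT δX, v ≠ 0 ∧ wt F v = w} (wt F v) := by
    refine ⟨⟨v, hv, hv0, rfl⟩, ?_⟩
    rintro _ ⟨u, hu, hu0, rfl⟩
    rw [code_eq_map_admissible] at hu
    obtain ⟨γ, hγ, rfl⟩ := hu
    exact_mod_cast hwt ▸ le_wt_evFam hγ hη hδ hδT hu0
  rw [dmin, hleast.csInf_eq, hwt]

end Hirz
end

section
/- Let η ≥ 2 and (δT,δX) ∈ ℤ×ℕ with δ := δT+η·δX ≥ 0. If q ≤ max(δ/(η+1), δT), then the minimum distance of C_η(δT,δX) equals d_η(δT,δX) = max(q−δX+1, 1) if δT ≥ 0, and d_η(δT,δX) = 1 if δT < 0. -/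
open MvPolynomial

attribute [local instance] Classical.propDecidable

namespace Hirz

variable (F : Type) [Field F] [Fintype F]

variable {F : Type} [Field F] [Fintype F]

set_option linter.unusedSectionVars false

def wdeg (η : ℕ) (σ : Fin 4 →₀ ℕ) : ℤ × ℤ :=
  ((σ 0 : ℤ) + σ 1 - η * σ 2, (σ 2 : ℤ) + σ 3)

lemma wdeg_add (η : ℕ) (a b : Fin 4 →₀ ℕ) : wdeg η (a + b) = wdeg η a + wdeg η b := by
  simp only [wdeg, Finsupp.add_apply, Prod.mk_add_mk, Prod.mk.injEq]
  push_cast; constructor <;> ring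

def BH (η : ℕ) (m : ℤ × ℤ) (P : MvPolynomial (Fin 4) F) : Prop :=
  ∀ σ ∈ P.support, wdeg η σ = m

lemma BH.mul {η m n} {P Q : MvPolynomial (Fin 4) F} (hP : BH η m P) (hQ : BH η n Q) :
    BH η (m + n) (P * Q) := by
  intro σ hσ
  have h := MvPolynomial.support_mul P Q hσ
  rw [Finset.mem_add] at h
  obtain ⟨a, ha, b, hb, rfl⟩ := h
  rw [wdeg_add, hP a ha, hQ b hb]

lemma BH_monomial {η m} (σ : Fin 4 →₀ ℕ) (r : F) (h : wdeg η σ = m) :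
    BH η m (monomial σ r) := by
  intro τ hτ
  rw [MvPolynomial.support_monomial] at hτ
  split at hτ
  · simp at hτ
  · simp only [Finset.mem_singleton] at hτ; subst hτ; exact h

lemma BH_one {η} : BH η 0 (1 : MvPolynomial (Fin 4) F) := by
  intro σ hσ
  rw [MvPolynomial.mem_support_iff, MvPolynomial.coeff_one] at hσ
  have : 0 = σ := by by_contra h; simp [h] at hσ
  subst this; simp [wdeg]

lemma BH_C {η} (a : F) : BH η 0 (C a : MvPolynomial (Fin 4) F) :=
  BH_monomial 0 a (by simp [wdeg])

lemma BH_X {η} (i : Fin 4) (m : ℤ × ℤ) (h : wdeg η (Finsupp.single i 1) = m) :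
    BH η m (X i : MvPolynomial (Fin 4) F) :=
  BH_monomial _ 1 h

lemma BH.pow {η m} {P : MvPolynomial (Fin 4) F} (hP : BH η m P) (n : ℕ) :
    BH η (n • m) (P ^ n) := by
  induction n with
  | zero => simpa using BH_one
  | succ k ih =>
      have := ih.mul hP
      rw [pow_succ]
      convert this using 1
      rw [succ_nsmul]

lemma BH.sub {η m} {P Q : MvPolynomial (Fin 4) F} (hP : BH η m P) (hQ : BH η m Q) :
    BH η m (P - Q) := by
  intro σ hσ
  have h := MvPolynomial.support_sub (Fin 4) P Q hσ
  rw [Finset.mem_union] at h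
  rcases h with h | h
  · exact hP σ h
  · exact hQ σ h

lemma BH.prod {η m} {α : Type*} {s : Finset α} {f : α → MvPolynomial (Fin 4) F}
    (h : ∀ a ∈ s, BH η m (f a)) : BH η (s.card • m) (∏ a ∈ s, f a) := by
  classical
  induction s using Finset.induction_on with
  | empty => simpa using BH_one
  | @insert a s ha ih =>
      rw [Finset.prod_insert ha, Finset.card_insert_of_notMem ha]
      have := (h a (Finset.mem_insert_self a s)).mul (ih fun b hb => h b (Finset.mem_insert_of_mem hb))
      convert this using 1
      rw [succ_nsmul, add_comm]

noncomputable def evL : MvPolynomial (Fin 4) F →ₗ[F] (HIdx F → F) where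
  toFun := ev F
  map_add' := by intro P Q; funext i; simp [ev]
  map_smul' := by intro c P; funext i; simp [ev, smul_eq_C_mul]

lemma code_eq_map (η : ℕ) (δT : ℤ) (δX : ℕ) :
    Code F η δT δX = (RSpan F η δT δX).map (evL (F := F)) := by
  rw [Code, RSpan, Submodule.map_span]; rfl

lemma mem_RSpan_of_BH {η : ℕ} {δT : ℤ} {δX : ℕ} {P : MvPolynomial (Fin 4) F}
    (h : BH η (δT, (δX : ℤ)) P) : P ∈ RSpan F η δT δX := by
  rw [← MvPolynomial.support_sum_monomial_coeff P]
  apply Submodule.sum_mem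
  intro σ hσ
  have hw := h σ hσ
  have hmem : mon F ⇑σ ∈ MSet F η δT δX := by
    refine ⟨⇑σ, ?_, rfl⟩
    have h1 : ((σ 0 : ℤ) + σ 1 - η * σ 2) = δT := congrArg Prod.fst hw
    have h2 : ((σ 2 : ℤ) + σ 3) = (δX : ℤ) := congrArg Prod.snd hw
    exact ⟨h1, by exact_mod_cast h2⟩
  have heq : (monomial σ) (coeff σ P) = coeff σ P • mon F ⇑σ := by
    rw [mon, Finsupp.equivFunOnFinite_symm_coe, MvPolynomial.smul_monomial, smul_eq_mul, mul_one]
  rw [heq]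
  exact Submodule.smul_mem _ _ (Submodule.subset_span hmem)

lemma wt_pos {v : HIdx F → F} (hv : v ≠ 0) : 1 ≤ wt F v := by
  obtain ⟨i, hi⟩ := Function.ne_iff.mp hv
  have : ({i | v i ≠ 0} : Set (HIdx F)).Nonempty := ⟨i, hi⟩
  have hfin : ({i | v i ≠ 0} : Set (HIdx F)).Finite := Set.toFinite _
  rw [wt]
  exact (Set.ncard_pos hfin).mpr this

set_option maxHeartbeats 1000000 in
lemma fiber_bound {η : ℕ} {δT : ℤ} {δX : ℕ} {v : HIdx F → F}
    (hv : v ∈ Code F η δT δX) (t1 t2 : F) (iB : F → HIdx F) (iInf : HIdx F)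
    (hptb : ∀ b, pt F (iB b) = ![t1, t2, 1, b])
    (hptInf : pt F iInf = ![t1, t2, 0, 1])
    (hinj : Function.Injective iB) (hni : ∀ b, iB b ≠ iInf)
    (hne : (∃ b, v (iB b) ≠ 0) ∨ v iInf ≠ 0) :
    Fintype.card F + 1 ≤ wt F v + δX := by
  classical
  rw [code_eq_map] at hv
  obtain ⟨P, hP, rfl⟩ := hv
  set f : Fin 4 → Polynomial F := ![Polynomial.C t1, Polynomial.C t2, 1, Polynomial.X] with hf
  -- key properties of the univariate restriction, by span induction
  have key : ∀ {Q : MvPolynomial (Fin 4) F}, Q ∈ RSpan F η δT δX →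
      (MvPolynomial.aeval f Q).degree ≤ (δX : WithBot ℕ) ∧
        (MvPolynomial.aeval f Q).coeff δX = eval ![t1, t2, 0, 1] Q := by
    intro Q hQ
    induction hQ using Submodule.span_induction with
    | mem x hx =>
        obtain ⟨c, ⟨hc1, hc2⟩, rfl⟩ := hx
        have hx3 : c 3 ≤ δX := by omega
        have hco : ∀ i, (Finsupp.equivFunOnFinite.symm c) i = c i := fun i => rfl
        have hmon : MvPolynomial.aeval f (mon F c)
            = Polynomial.C (t1 ^ c 0 * t2 ^ c 1) * Polynomial.X ^ c 3 := by
          rw [mon, MvPolynomial.aeval_monomial, map_one, one_mul,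
            Finsupp.prod_fintype _ _ (fun i => pow_zero _)]
          simp only [hco]
          rw [Fin.prod_univ_four]
          have hf0 : f 0 = Polynomial.C t1 := rfl
          have hf1 : f 1 = Polynomial.C t2 := rfl
          have hf2 : f 2 = 1 := rfl
          have hf3 : f 3 = Polynomial.X := rfl
          rw [hf0, hf1, hf2, hf3, one_pow, mul_one, ← Polynomial.C_pow, ← Polynomial.C_pow,
            ← map_mul]
        have heval : eval ![t1, t2, 0, 1] (mon F c) = t1 ^ c 0 * t2 ^ c 1 * 0 ^ c 2 * 1 ^ c 3 := by
          rw [mon, eval_monomial, one_mul, Finsupp.prod_fintype _ _ (fun i => pow_zero _)]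
          simp only [hco]
          rw [Fin.prod_univ_four]
          rfl
        constructor
        · rw [hmon]
          refine le_trans (Polynomial.degree_mul_le _ _) ?_
          have h1 : (Polynomial.C (t1 ^ c 0 * t2 ^ c 1)).degree ≤ 0 := Polynomial.degree_C_le
          have h2 : (Polynomial.X ^ c 3 : Polynomial F).degree ≤ (δX : WithBot ℕ) := by
            rw [Polynomial.degree_X_pow]; exact_mod_cast hx3
          calc _ ≤ 0 + (δX : WithBot ℕ) := add_le_add h1 h2
            _ = _ := by rw [zero_add]
        · rw [hmon, heval, Polynomial.coeff_C_mul, Polynomial.coeff_X_pow]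
          by_cases hc0 : c 2 = 0
          · have h3 : c 3 = δX := by omega
            rw [if_pos h3.symm, hc0]; simp
          · rw [if_neg (by omega), zero_pow hc0]; ring
    | zero => simp
    | add x y hx hy ihx ihy =>
        constructor
        · rw [map_add]
          exact le_trans (Polynomial.degree_add_le _ _) (max_le ihx.1 ihy.1)
        · rw [map_add, Polynomial.coeff_add, ihx.2, ihy.2, map_add]
    | smul a x hx ih =>
        constructor
        · rw [map_smul]
          exact le_trans (Polynomial.degree_smul_le _ _) ih.1
        · rw [map_smul, Polynomial.coeff_smul, ih.2, smul_eq_C_mul, map_mul, eval_C,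
            smul_eq_mul]
  set g : Polynomial F := MvPolynomial.aeval f P with hg
  have hevalg : ∀ b, Polynomial.eval b g = eval ![t1, t2, 1, b] P := by
    intro b
    rw [hg, MvPolynomial.aeval_def, ← Polynomial.coe_evalRingHom,
      MvPolynomial.eval₂_comp_left (Polynomial.evalRingHom b)]
    have h1 : (Polynomial.evalRingHom b).comp (algebraMap F (Polynomial F)) = RingHom.id F := by
      ext x; simp
    rw [h1]
    have h2 : (Polynomial.evalRingHom b) ∘ f = ![t1, t2, 1, b] := by
      funext i; fin_cases i <;> simp [hf]
    rw [h2]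
    rfl
  have hvb : ∀ b, evL P (iB b) = Polynomial.eval b g := by
    intro b; show ev F P _ = _; rw [ev, hptb b, hevalg]
  have hvInf : evL P iInf = g.coeff δX := by
    show ev F P _ = _; rw [ev, hptInf, ← (key hP).2]
  set NZ := Finset.univ.filter (fun b : F => Polynomial.eval b g ≠ 0) with hNZ
  -- the support contains the image of NZ
  have himgsub : (iB '' ↑NZ) ⊆ {i | evL P i ≠ 0} := by
    rintro _ ⟨b, hb, rfl⟩
    rw [Finset.coe_filter, Set.mem_setOf_eq] at hb
    rw [Set.mem_setOf_eq, hvb b]; exact hb.2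
  have himgcard : (iB '' ↑NZ).ncard = NZ.card := by
    rw [Set.ncard_image_of_injective _ hinj, Set.ncard_coe_finset]
  have hwt : wt F (evL P) = ({i | evL P i ≠ 0} : Set (HIdx F)).ncard := rfl
  have hgN : g ≠ 0 → Fintype.card F ≤ NZ.card + g.natDegree := by
    intro hgne
    have hZ : (Finset.univ.filter (fun b : F => Polynomial.eval b g = 0)).card ≤ g.natDegree := by
      refine le_trans (Finset.card_le_card ?_)
        (le_trans (Multiset.toFinset_card_le _) (Polynomial.card_roots' g))
      intro b hb
      rw [Finset.mem_filter] at hb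
      rw [Multiset.mem_toFinset, Polynomial.mem_roots hgne]
      exact hb.2
    have h2 : NZ = (Finset.univ.filter (fun b : F => Polynomial.eval b g = 0))ᶜ := by
      rw [hNZ, Finset.compl_filter]
    rw [h2, Finset.card_compl]
    have h3 : (Finset.univ.filter (fun b : F => Polynomial.eval b g = 0)).card
        ≤ Fintype.card F := Finset.card_filter_le _ _
    omega
  by_cases hcoe : g.coeff δX = 0
  · -- the point at infinity of the fiber vanishes; some b works
    obtain ⟨b0, hb0⟩ : ∃ b, evL P (iB b) ≠ 0 := by
      rcases hne with h | h
      · exact h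
      · exact absurd (hvInf.trans hcoe) h
    have hgne : g ≠ 0 := fun h => hb0 (by rw [hvb b0, h, Polynomial.eval_zero])
    have hdeg : g.natDegree + 1 ≤ δX := by
      have hle : g.natDegree ≤ δX := Polynomial.natDegree_le_iff_degree_le.mpr (key hP).1
      rcases Nat.lt_or_ge g.natDegree δX with h | h
      · omega
      · exfalso
        have : g.natDegree = δX := le_antisymm hle h
        have : g.leadingCoeff ≠ 0 := Polynomial.leadingCoeff_ne_zero.mpr hgne
        rw [Polynomial.leadingCoeff, ‹g.natDegree = δX›] at this
        exact this hcoe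
    have hwtge : NZ.card ≤ wt F (evL P) := by
      rw [hwt, ← himgcard]
      exact Set.ncard_le_ncard himgsub (Set.toFinite _)
    have := hgN hgne
    omega
  · -- the point at infinity is in the support
    have hgne : g ≠ 0 := fun h => hcoe (by rw [h, Polynomial.coeff_zero])
    have hdeg : g.natDegree ≤ δX := Polynomial.natDegree_le_iff_degree_le.mpr (key hP).1
    have hsub2 : (iB '' ↑NZ) ∪ {iInf} ⊆ {i | evL P i ≠ 0} := by
      rw [Set.union_subset_iff]
      refine ⟨himgsub, ?_⟩
      intro i hi
      rw [Set.mem_singleton_iff] at hi; subst hi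
      rw [Set.mem_setOf_eq, hvInf]; exact hcoe
    have hdisj : Disjoint (iB '' ↑NZ) ({iInf} : Set (HIdx F)) := by
      rw [Set.disjoint_singleton_right]
      rintro ⟨b, _, hb⟩
      exact hni b hb
    have hcardu : ((iB '' ↑NZ) ∪ {iInf}).ncard = NZ.card + 1 := by
      rw [Set.ncard_union_eq hdisj (Set.toFinite _) (Set.toFinite _), himgcard,
        Set.ncard_singleton]
    have hwtge : NZ.card + 1 ≤ wt F (evL P) := by
      rw [hwt, ← hcardu]
      exact Set.ncard_le_ncard hsub2 (Set.toFinite _)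
    have := hgN hgne
    omega

lemma wt_lower {η : ℕ} {δT : ℤ} {δX : ℕ} {v : HIdx F → F}
    (hv : v ∈ Code F η δT δX) (hvne : v ≠ 0) :
    Fintype.card F + 1 ≤ wt F v + δX := by
  obtain ⟨i, hi⟩ := Function.ne_iff.mp hvne
  match i with
  | Sum.inl (a, b) =>
      exact fiber_bound hv 1 a (fun b' => Sum.inl (a, b')) (Sum.inr (Sum.inr (Sum.inl a)))
        (fun b' => rfl) rfl (fun x y h => by simpa using h) (fun b' => by simp)
        (Or.inl ⟨b, hi⟩)
  | Sum.inr (Sum.inl b) =>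
      exact fiber_bound hv 0 1 (fun b' => Sum.inr (Sum.inl b'))
        (Sum.inr (Sum.inr (Sum.inr ())))
        (fun b' => rfl) rfl (fun x y h => by simpa using h) (fun b' => by simp)
        (Or.inl ⟨b, hi⟩)
  | Sum.inr (Sum.inr (Sum.inl a)) =>
      exact fiber_bound hv 1 a (fun b' => Sum.inl (a, b')) (Sum.inr (Sum.inr (Sum.inl a)))
        (fun b' => rfl) rfl (fun x y h => by simpa using h) (fun b' => by simp)
        (Or.inr hi)
  | Sum.inr (Sum.inr (Sum.inr u)) =>
      exact fiber_bound hv 0 1 (fun b' => Sum.inr (Sum.inl b'))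
        (Sum.inr (Sum.inr (Sum.inr ())))
        (fun b' => rfl) rfl (fun x y h => by simpa using h) (fun b' => by simp)
        (Or.inr hi)

lemma dmin_le {η : ℕ} {δT : ℤ} {δX : ℕ} {v : HIdx F → F}
    (hv : v ∈ Code F η δT δX) (hvne : v ≠ 0) : dmin F η δT δX ≤ wt F v :=
  Nat.sInf_le ⟨v, hv, hvne, rfl⟩

lemma dmin_ge {η : ℕ} {δT : ℤ} {δX : ℕ} {v : HIdx F → F} {d : ℕ}
    (hv : v ∈ Code F η δT δX) (hvne : v ≠ 0)
    (h : ∀ u ∈ Code F η δT δX, u ≠ 0 → d ≤ wt F u) : d ≤ dmin F η δT δX := by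
  refine le_csInf ⟨wt F v, v, hv, hvne, rfl⟩ ?_
  rintro w ⟨u, hu, hune, rfl⟩
  exact h u hu hune

lemma dmin_eq_one {η : ℕ} {δT : ℤ} {δX : ℕ} {v : HIdx F → F}
    (hv : v ∈ Code F η δT δX) (hvne : v ≠ 0) (h1 : wt F v = 1) :
    dmin F η δT δX = 1 := by
  refine le_antisymm (h1 ▸ dmin_le hv hvne) ?_
  exact dmin_ge hv hvne (fun u hu hune => wt_pos hune)

lemma BH.of_eq {η : ℕ} {m m' : ℤ × ℤ} {P : MvPolynomial (Fin 4) F} (h : BH η m P)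
    (hm : m = m') : BH η m' P := hm ▸ h

lemma smul_pair (n : ℕ) (a b : ℤ) : n • ((a, b) : ℤ × ℤ) = ((n : ℤ) * a, (n : ℤ) * b) := by
  rw [Prod.smul_mk]; simp [nsmul_eq_mul]

lemma BH_T1 {η : ℕ} : BH η (1, 0) (X 0 : MvPolynomial (Fin 4) F) :=
  BH_X 0 _ (by simp [wdeg, Finsupp.single_apply])

lemma BH_T2 {η : ℕ} : BH η (1, 0) (X 1 : MvPolynomial (Fin 4) F) :=
  BH_X 1 _ (by simp [wdeg, Finsupp.single_apply])

lemma BH_X1 {η : ℕ} : BH η (-(η : ℤ), 1) (X 2 : MvPolynomial (Fin 4) F) :=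
  BH_X 2 _ (by simp [wdeg, Finsupp.single_apply])

lemma BH_X2 {η : ℕ} : BH η (0, 1) (X 3 : MvPolynomial (Fin 4) F) :=
  BH_X 3 _ (by simp [wdeg, Finsupp.single_apply])

/-- `T2 - a T1` has bidegree `(1,0)`. -/
lemma BH_Tfac {η : ℕ} (a : F) : BH η (1, 0) (X 1 - C a * X 0 : MvPolynomial (Fin 4) F) :=
  BH_T2.sub (((BH_C a).mul BH_T1).of_eq (by simp))

/-- `X2 - s T1^η X1` has bidegree `(0,1)`. -/
lemma BH_XfacA {η : ℕ} (s : F) :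
    BH η (0, 1) (X 3 - C s * X 0 ^ η * X 2 : MvPolynomial (Fin 4) F) := by
  refine BH_X2.sub ?_
  have := (((BH_C (η := η) s).mul ((BH_T1 (η := η)).pow η)).mul (BH_X1 (η := η)))
  refine this.of_eq ?_
  rw [smul_pair]
  simp [Prod.ext_iff]

/-- `X2 - b T2^η X1` has bidegree `(0,1)`. -/
lemma BH_XfacB {η : ℕ} (b : F) :
    BH η (0, 1) (X 3 - C b * X 1 ^ η * X 2 : MvPolynomial (Fin 4) F) := by
  refine BH_X2.sub ?_
  have := (((BH_C (η := η) b).mul ((BH_T2 (η := η)).pow η)).mul (BH_X1 (η := η)))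
  refine this.of_eq ?_
  rw [smul_pair]
  simp [Prod.ext_iff]

lemma constructionA (η : ℕ) (δT : ℤ) (δX : ℕ)
    (hqT : (Fintype.card F : ℤ) ≤ δT) :
    ∃ v ∈ Code F η δT δX, v ≠ 0 ∧
      wt F v = (Fintype.card F - min δX (Fintype.card F)) + 1 := by
  classical
  set q := Fintype.card F with hqdef
  have hq1 : 1 ≤ q := Fintype.card_pos
  have hminq : min δX q ≤ (Finset.univ : Finset F).card := by
    rw [Finset.card_univ]; exact min_le_right _ _
  obtain ⟨B, hBsub, hBcard⟩ := Finset.exists_subset_card_eq hminq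
  set s1 : F := if hB : B.Nonempty then hB.choose else 0 with hs1
  have hs1B : B.Nonempty → s1 ∈ B := by
    intro hB; rw [hs1, dif_pos hB]; exact hB.choose_spec
  set e : ℕ := (δT - (q - 1)).toNat with he
  have heZ : (e : ℤ) = δT - q + 1 := by
    rw [he, Int.toNat_of_nonneg (by omega)]; ring
  have he1 : 1 ≤ e := by omega
  set pad : ℕ := δX - min δX q with hpad
  set P : MvPolynomial (Fin 4) F :=
    (X 0) ^ e * (∏ a ∈ Finset.univ.erase (0 : F), (X 1 - C a * X 0)) *
    ((∏ s ∈ B, (X 3 - C s * X 0 ^ η * X 2)) *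
      (X 3 - C s1 * X 0 ^ η * X 2) ^ pad) with hP
  have hPmem : P ∈ RSpan F η δT δX := by
    apply mem_RSpan_of_BH
    have h1 := ((BH_T1 (η := η)).pow e).mul
      (BH.prod (s := Finset.univ.erase (0 : F)) (fun a _ => BH_Tfac (η := η) a))
    have h2 := (BH.prod (s := B) (fun s _ => BH_XfacA (η := η) s)).mul
      ((BH_XfacA (η := η) s1).pow pad)
    refine (h1.mul h2).of_eq ?_
    rw [Finset.card_erase_of_mem (Finset.mem_univ _), Finset.card_univ, hBcard]
    simp only [smul_pair, Prod.mk_add_mk, Prod.ext_iff]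
    constructor
    · push_cast
      have : min δX q ≤ δX := min_le_left _ _
      rw [Nat.cast_sub hq1]
      push_cast
      omega
    · have h3 : min δX q ≤ δX := min_le_left _ _
      push_cast [hpad, Nat.cast_sub h3]
      ring
  -- evaluation values
  have hv1 : ∀ a b : F, evL (F := F) P (Sum.inl (a, b)) =
      1 ^ e * (∏ a' ∈ Finset.univ.erase (0 : F), (a - a' * 1)) *
      ((∏ s ∈ B, (b - s * 1 ^ η * 1)) * (b - s1 * 1 ^ η * 1) ^ pad) := by
    intro a b
    show eval (pt F (Sum.inl (a, b))) P = _
    rw [hP]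
    simp only [map_mul, map_prod, map_pow, map_sub, eval_X, eval_C]
    rfl
  have hv2 : ∀ b : F, evL (F := F) P (Sum.inr (Sum.inl b)) = 0 := by
    intro b
    show eval (pt F (Sum.inr (Sum.inl b))) P = _
    rw [hP]
    simp only [map_mul, map_prod, map_pow, map_sub, eval_X, eval_C]
    have h0 : pt F (Sum.inr (Sum.inl b)) 0 = 0 := rfl
    rw [h0, zero_pow (by omega), zero_mul, zero_mul]
  have hv3 : ∀ a : F, evL (F := F) P (Sum.inr (Sum.inr (Sum.inl a))) =
      1 ^ e * (∏ a' ∈ Finset.univ.erase (0 : F), (a - a' * 1)) *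
      ((∏ s ∈ B, (1 - s * 1 ^ η * 0)) * (1 - s1 * 1 ^ η * 0) ^ pad) := by
    intro a
    show eval (pt F (Sum.inr (Sum.inr (Sum.inl a)))) P = _
    rw [hP]
    simp only [map_mul, map_prod, map_pow, map_sub, eval_X, eval_C]
    rfl
  have hv4 : evL (F := F) P (Sum.inr (Sum.inr (Sum.inr ()))) = 0 := by
    show eval (pt F (Sum.inr (Sum.inr (Sum.inr ())))) P = _
    rw [hP]
    simp only [map_mul, map_prod, map_pow, map_sub, eval_X, eval_C]
    have h0 : pt F (Sum.inr (Sum.inr (Sum.inr ()))) 0 = 0 := rfl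
    rw [h0, zero_pow (by omega), zero_mul, zero_mul]
  -- nonvanishing criteria
  have hT : ∀ a : F, (∏ a' ∈ Finset.univ.erase (0 : F), (a - a' * 1)) ≠ 0 ↔ a = 0 := by
    intro a
    constructor
    · intro h
      by_contra ha
      exact h (Finset.prod_eq_zero (Finset.mem_erase.mpr ⟨ha, Finset.mem_univ a⟩) (by ring))
    · intro ha
      subst ha
      refine Finset.prod_ne_zero_iff.mpr (fun a' ha' => fun hcon => ?_)
      exact (Finset.mem_erase.mp ha').1 (by linear_combination -hcon)
  have hXv : ∀ b : F,
      ((∏ s ∈ B, (b - s * 1 ^ η * 1)) * (b - s1 * 1 ^ η * 1) ^ pad) ≠ 0 ↔ b ∉ B := by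
    intro b
    constructor
    · intro h hb
      exact h (by rw [Finset.prod_eq_zero hb (by ring), zero_mul])
    · intro hb
      apply mul_ne_zero
      · refine Finset.prod_ne_zero_iff.mpr (fun s hs => fun hcon => ?_)
        apply hb
        have : b = s := by linear_combination hcon
        rwa [this]
      · rcases Nat.eq_zero_or_pos pad with hp | hp
        · rw [hp, pow_zero]; exact one_ne_zero
        · exfalso
          have hmq : min δX q = q := by omega
          have hBuniv : B = Finset.univ :=
            Finset.eq_univ_of_card B (by rw [hBcard, hmq])
          exact hb (hBuniv ▸ Finset.mem_univ b)
  -- support of the codeword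
  have hnz0 : evL (F := F) P (Sum.inr (Sum.inr (Sum.inl (0 : F)))) ≠ 0 := by
    rw [hv3 0]
    have hXone : ((∏ s ∈ B, ((1 : F) - s * 1 ^ η * 0)) * ((1 : F) - s1 * 1 ^ η * 0) ^ pad)
        = 1 := by simp
    rw [hXone, mul_one, one_pow, one_mul]
    exact (hT 0).mpr rfl
  have hsupp : {i | evL (F := F) P i ≠ 0} =
      ((fun b => (Sum.inl ((0 : F), b) : HIdx F)) '' {b : F | b ∉ B}) ∪
        {Sum.inr (Sum.inr (Sum.inl (0 : F)))} := by
    ext i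
    match i with
    | Sum.inl (a, b) =>
        rw [Set.mem_setOf_eq, hv1 a b, one_pow, one_mul, mul_ne_zero_iff, hT, hXv]
        simp only [Set.mem_union, Set.mem_image, Set.mem_setOf_eq, Set.mem_singleton_iff,
          Sum.inl.injEq, Prod.mk.injEq, Sum.inr.injEq]
        constructor
        · rintro ⟨rfl, hbB⟩; exact Or.inl ⟨b, hbB, rfl, rfl⟩
        · rintro (⟨b', hb', rfl, rfl⟩ | h)
          · exact ⟨rfl, hb'⟩
          · exact absurd h (by simp)
    | Sum.inr (Sum.inl b) =>
        rw [Set.mem_setOf_eq, hv2 b]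
        simp
    | Sum.inr (Sum.inr (Sum.inl a)) =>
        rw [Set.mem_setOf_eq, hv3 a]
        have hXone : ((∏ s ∈ B, ((1 : F) - s * 1 ^ η * 0)) * ((1 : F) - s1 * 1 ^ η * 0) ^ pad)
            = 1 := by simp
        rw [hXone, mul_one, one_pow, one_mul, hT]
        simp only [Set.mem_union, Set.mem_image, Set.mem_setOf_eq, Set.mem_singleton_iff,
          Sum.inr.injEq, Sum.inl.injEq]
        constructor
        · rintro rfl; exact Or.inr rfl
        · rintro (⟨b', _, h⟩ | h)
          · exact absurd h (by simp)
          · exact h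
    | Sum.inr (Sum.inr (Sum.inr u)) =>
        rw [Set.mem_setOf_eq, hv4]
        simp
  refine ⟨evL (F := F) P, ?_, ?_, ?_⟩
  · rw [code_eq_map]
    exact ⟨P, hPmem, rfl⟩
  · exact Function.ne_iff.mpr ⟨_, hnz0⟩
  · rw [wt, hsupp]
    have hdisj : Disjoint ((fun b => (Sum.inl ((0 : F), b) : HIdx F)) '' {b : F | b ∉ B})
        ({Sum.inr (Sum.inr (Sum.inl (0 : F)))} : Set (HIdx F)) := by
      rw [Set.disjoint_singleton_right]
      rintro ⟨b, _, hcon⟩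
      exact absurd hcon (by simp)
    rw [Set.ncard_union_eq hdisj (Set.toFinite _) (Set.toFinite _),
      Set.ncard_image_of_injective _ (fun x y h => by simpa using h), Set.ncard_singleton]
    have hcompl : {b : F | b ∉ B} = (↑(Bᶜ) : Set F) := by ext b; simp
    rw [hcompl, Set.ncard_coe_finset, Finset.card_compl, hBcard]

set_option maxHeartbeats 1000000 in
lemma constructionB (η : ℕ) (δT : ℤ) (δX : ℕ) (hη : 2 ≤ η)
    (hqT : δT < (Fintype.card F : ℤ))
    (hbud : (Fintype.card F : ℤ) * ((η : ℤ) + 1) ≤ δT + (η : ℤ) * (δX : ℤ)) :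
    ∃ v ∈ Code F η δT δX, v ≠ 0 ∧ wt F v = 1 := by
  classical
  set q := Fintype.card F with hqdef
  have hq1 : 1 ≤ q := Fintype.card_pos
  have hηpos : 0 < η := by omega
  set n : ℕ := (-δT).toNat with hn
  obtain ⟨m, hm1, hm2⟩ : ∃ m : ℕ, n ≤ η * m ∧ η * m ≤ n + η - 1 := by
    refine ⟨(n + η - 1) / η, ?_, ?_⟩ <;>
    · have h := Nat.div_add_mod (n + η - 1) η
      have h2 : (n + η - 1) % η < η := Nat.mod_lt _ hηpos
      omega
  have htnn : 0 ≤ δT + (η : ℤ) * (m : ℤ) := by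
    have h1 : (n : ℤ) ≤ ((η * m : ℕ) : ℤ) := by exact_mod_cast hm1
    push_cast at h1
    have h2 : (n : ℤ) = max (-δT) 0 := by rw [hn]; omega
    omega
  obtain ⟨t, htZ⟩ : ∃ t : ℕ, (t : ℤ) = δT + (η : ℤ) * (m : ℤ) :=
    ⟨(δT + (η : ℤ) * (m : ℤ)).toNat, Int.toNat_of_nonneg htnn⟩
  have hminq : min t q ≤ (Finset.univ : Finset F).card := by
    rw [Finset.card_univ]; exact min_le_right _ _
  obtain ⟨S0, hS0sub, hS0card⟩ := Finset.exists_subset_card_eq hminq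
  obtain ⟨r, hrdef⟩ : ∃ r : ℕ, r + min t q = q := ⟨q - min t q, by omega⟩
  have hRcard : (S0ᶜ).card = r := by
    rw [Finset.card_compl, hS0card, ← hqdef]
    omega
  obtain ⟨k, hk1, hk2⟩ : ∃ k : ℕ, r ≤ η * k ∧ η * k ≤ r + η - 1 := by
    refine ⟨(r + η - 1) / η, ?_, ?_⟩ <;>
    · have h := Nat.div_add_mod (r + η - 1) η
      have h2 : (r + η - 1) % η < η := Nat.mod_lt _ hηpos
      omega
  -- auxiliary multiplicative facts for omega
  have him : m = 0 → η * m = 0 := fun h => by rw [h, mul_zero]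
  have him2 : 1 ≤ m → η ≤ η * m := fun h => Nat.le_mul_of_pos_right η h
  have hik : k = 0 → η * k = 0 := fun h => by rw [h, mul_zero]
  have hik2 : 1 ≤ k → η ≤ η * k := fun h => Nat.le_mul_of_pos_right η h
  have hnZ : (n : ℤ) = max (-δT) 0 := by rw [hn]; omega
  -- ℤ versions
  have hm1' : (n : ℤ) ≤ (η : ℤ) * (m : ℤ) := by exact_mod_cast hm1
  have hm2' : (η : ℤ) * (m : ℤ) ≤ (n : ℤ) + η - 1 := by
    have h1 : ((η * m : ℕ) : ℤ) ≤ ((n + η - 1 : ℕ) : ℤ) := by exact_mod_cast hm2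
    push_cast at h1
    omega
  have hk1' : (r : ℤ) ≤ (η : ℤ) * (k : ℤ) := by exact_mod_cast hk1
  have hk2' : (η : ℤ) * (k : ℤ) ≤ (r : ℤ) + η - 1 := by
    have h1 : ((η * k : ℕ) : ℤ) ≤ ((r + η - 1 : ℕ) : ℤ) := by exact_mod_cast hk2
    push_cast at h1
    omega
  have him' : m = 0 → (η : ℤ) * (m : ℤ) = 0 := fun h => by rw [h]; push_cast; ring
  have him2' : 1 ≤ m → (η : ℤ) ≤ (η : ℤ) * (m : ℤ) := fun h => by exact_mod_cast him2 h
  have hik' : k = 0 → (η : ℤ) * (k : ℤ) = 0 := fun h => by rw [h]; push_cast; ring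
  have hik2' : 1 ≤ k → (η : ℤ) ≤ (η : ℤ) * (k : ℤ) := fun h => by exact_mod_cast hik2 h
  have hbud' : (η : ℤ) * (q : ℤ) + (q : ℤ) ≤ δT + (η : ℤ) * (δX : ℤ) := by
    linear_combination hbud
  have hrQ : (r : ℤ) + ((min t q : ℕ) : ℤ) = (q : ℤ) := by exact_mod_cast hrdef
  have hminor : ((min t q : ℕ) : ℤ) = (t : ℤ) ∨ ((min t q : ℕ) : ℤ) = (q : ℤ) := by
    rcases min_choice t q with h | h <;> [left; right] <;> rw [h]
  -- the key budget inequality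
  have hbudgetZ : (η : ℤ) * (m : ℤ) + (η : ℤ) * (k : ℤ) + (η : ℤ) * (q : ℤ)
      ≤ (η : ℤ) * (δX : ℤ) + η := by
    omega
  have hbudget : m + k + (q - 1) ≤ δX := by
    have hmul : η * (m + k + q) ≤ η * (δX + 1) := by
      have h1 : (η : ℤ) * ((m : ℤ) + k + q) ≤ (η : ℤ) * ((δX : ℤ) + 1) := by
        calc (η : ℤ) * ((m : ℤ) + k + q) = (η:ℤ)*m + (η:ℤ)*k + (η:ℤ)*q := by ring
          _ ≤ (η : ℤ) * (δX : ℤ) + η := hbudgetZ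
          _ = (η : ℤ) * ((δX : ℤ) + 1) := by ring
      exact_mod_cast h1
    have := Nat.le_of_mul_le_mul_left hmul hηpos
    omega
  have hmk : 1 ≤ m ∨ 1 ≤ k := by
    by_contra hcon
    push_neg at hcon
    obtain ⟨hm0, hk0⟩ := hcon
    have hm0' : (η : ℤ) * (m : ℤ) = 0 := him' (by omega)
    have hk0' : (η : ℤ) * (k : ℤ) = 0 := hik' (by omega)
    omega
  set pad : ℕ := δX - (m + k + (q - 1)) with hpad
  set P : MvPolynomial (Fin 4) F :=
    (∏ a ∈ S0, (X 1 - C a * X 0)) * (X 1) ^ (t - S0.card) * (X 2) ^ m *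
      ((X 2) ^ k * (∏ a ∈ S0ᶜ, (X 1 - C a * X 0)) * (X 1) ^ (η * k - r)) *
      (∏ b ∈ Finset.univ.erase (0 : F), (X 3 - C b * X 1 ^ η * X 2)) *
      (X 3 - C 1 * X 1 ^ η * X 2) ^ pad with hP
  have hPmem : P ∈ RSpan F η δT δX := by
    apply mem_RSpan_of_BH
    have h1 := BH.prod (s := S0) (fun a _ => BH_Tfac (η := η) a)
    have h2 := (BH_T2 (F := F) (η := η)).pow (t - S0.card)
    have h3 := (BH_X1 (F := F) (η := η)).pow m
    have g1 := (BH_X1 (F := F) (η := η)).pow k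
    have g2 := BH.prod (s := S0ᶜ) (fun a _ => BH_Tfac (η := η) a)
    have g3 := (BH_T2 (F := F) (η := η)).pow (η * k - r)
    have hH := BH.prod (s := Finset.univ.erase (0 : F)) (fun b _ => BH_XfacB (η := η) b)
    have hPp := (BH_XfacB (η := η) (1 : F)).pow pad
    refine (((((h1.mul h2).mul h3).mul ((g1.mul g2).mul g3)).mul hH).mul hPp).of_eq ?_
    rw [hS0card, hRcard, Finset.card_erase_of_mem (Finset.mem_univ _), Finset.card_univ,
      ← hqdef]
    simp only [smul_pair, Prod.mk_add_mk, Prod.ext_iff]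
    have hc1 : min t q ≤ t := min_le_left _ _
    constructor
    · push_cast [Nat.cast_sub hc1, Nat.cast_sub hk1]
      linear_combination htZ
    · push_cast [Nat.cast_sub hq1, Nat.cast_sub hc1, Nat.cast_sub hk1, Nat.cast_sub hbudget]
      omega
  have hv1 : ∀ a b : F, evL (F := F) P (Sum.inl (a, b)) =
      (∏ a' ∈ S0, (a - a' * 1)) * a ^ (t - S0.card) * 1 ^ m *
        (1 ^ k * (∏ a' ∈ S0ᶜ, (a - a' * 1)) * a ^ (η * k - r)) *
        (∏ b' ∈ Finset.univ.erase (0 : F), (b - b' * a ^ η * 1)) *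
        (b - 1 * a ^ η * 1) ^ pad := by
    intro a b
    show eval (pt F (Sum.inl (a, b))) P = _
    rw [hP]
    simp only [map_mul, map_prod, map_pow, map_sub, eval_X, eval_C]
    rfl
  have hv2 : ∀ b : F, evL (F := F) P (Sum.inr (Sum.inl b)) =
      (∏ a' ∈ S0, ((1 : F) - a' * 0)) * 1 ^ (t - S0.card) * 1 ^ m *
        (1 ^ k * (∏ a' ∈ S0ᶜ, ((1 : F) - a' * 0)) * 1 ^ (η * k - r)) *
        (∏ b' ∈ Finset.univ.erase (0 : F), (b - b' * 1 ^ η * 1)) *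
        (b - 1 * 1 ^ η * 1) ^ pad := by
    intro b
    show eval (pt F (Sum.inr (Sum.inl b))) P = _
    rw [hP]
    simp only [map_mul, map_prod, map_pow, map_sub, eval_X, eval_C]
    rfl
  have hv3 : ∀ a : F, evL (F := F) P (Sum.inr (Sum.inr (Sum.inl a))) =
      (∏ a' ∈ S0, (a - a' * 1)) * a ^ (t - S0.card) * 0 ^ m *
        (0 ^ k * (∏ a' ∈ S0ᶜ, (a - a' * 1)) * a ^ (η * k - r)) *
        (∏ b' ∈ Finset.univ.erase (0 : F), ((1 : F) - b' * a ^ η * 0)) *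
        ((1 : F) - 1 * a ^ η * 0) ^ pad := by
    intro a
    show eval (pt F (Sum.inr (Sum.inr (Sum.inl a)))) P = _
    rw [hP]
    simp only [map_mul, map_prod, map_pow, map_sub, eval_X, eval_C]
    rfl
  have hv4 : evL (F := F) P (Sum.inr (Sum.inr (Sum.inr ()))) =
      (∏ a' ∈ S0, ((1 : F) - a' * 0)) * 1 ^ (t - S0.card) * 0 ^ m *
        (0 ^ k * (∏ a' ∈ S0ᶜ, ((1 : F) - a' * 0)) * 1 ^ (η * k - r)) *
        (∏ b' ∈ Finset.univ.erase (0 : F), ((1 : F) - b' * 1 ^ η * 0)) *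
        ((1 : F) - 1 * 1 ^ η * 0) ^ pad := by
    show eval (pt F (Sum.inr (Sum.inr (Sum.inr ())))) P = _
    rw [hP]
    simp only [map_mul, map_prod, map_pow, map_sub, eval_X, eval_C]
    rfl
  -- vanishing at all T-fibers over rational points of ℙ¹
  have hTzero : ∀ a : F,
      (∏ a' ∈ S0, (a - a' * 1)) = 0 ∨ (∏ a' ∈ S0ᶜ, (a - a' * 1)) = 0 := by
    intro a
    by_cases ha : a ∈ S0
    · exact Or.inl (Finset.prod_eq_zero ha (by ring))
    · exact Or.inr (Finset.prod_eq_zero (Finset.mem_compl.mpr ha) (by ring))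
  have hz1 : ∀ a b : F, evL (F := F) P (Sum.inl (a, b)) = 0 := by
    intro a b
    rw [hv1 a b]
    rcases hTzero a with h | h <;> rw [h] <;> ring
  have hz3 : ∀ a : F, evL (F := F) P (Sum.inr (Sum.inr (Sum.inl a))) = 0 := by
    intro a
    rw [hv3 a]
    rcases hTzero a with h | h <;> rw [h] <;> ring
  have hz4 : evL (F := F) P (Sum.inr (Sum.inr (Sum.inr ()))) = 0 := by
    rw [hv4]
    rcases hmk with h | h
    · rw [zero_pow (by omega : m ≠ 0)]; ring
    · rw [zero_pow (by omega : k ≠ 0)]; ring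
  have hv2' : ∀ b : F, evL (F := F) P (Sum.inr (Sum.inl b)) =
      (∏ b' ∈ Finset.univ.erase (0 : F), (b - b')) * (b - 1) ^ pad := by
    intro b
    rw [hv2 b]
    simp
  have hz2 : ∀ b : F, evL (F := F) P (Sum.inr (Sum.inl b)) ≠ 0 ↔ b = 0 := by
    intro b
    rw [hv2' b]
    constructor
    · intro h
      by_contra hb
      exact h (by rw [Finset.prod_eq_zero (Finset.mem_erase.mpr ⟨hb, Finset.mem_univ b⟩)
        (sub_self b), zero_mul])
    · rintro rfl
      apply mul_ne_zero
      · refine Finset.prod_ne_zero_iff.mpr (fun b' hb' => fun hcon => ?_)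
        exact (Finset.mem_erase.mp hb').1 (by linear_combination -hcon)
      · apply pow_ne_zero
        intro hcon
        exact one_ne_zero (α := F) (by linear_combination -hcon)
  refine ⟨evL (F := F) P, ?_, ?_, ?_⟩
  · rw [code_eq_map]
    exact ⟨P, hPmem, rfl⟩
  · exact Function.ne_iff.mpr ⟨Sum.inr (Sum.inl 0), (hz2 0).mpr rfl⟩
  · have hsupp : {i | evL (F := F) P i ≠ 0} = {Sum.inr (Sum.inl (0 : F))} := by
      ext i
      match i with
      | Sum.inl (a, b) => simp [hz1 a b]
      | Sum.inr (Sum.inl b) =>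
          rw [Set.mem_setOf_eq, hz2 b, Set.mem_singleton_iff]
          constructor
          · rintro rfl; rfl
          · intro h; exact Sum.inl.inj (Sum.inr.inj h)
      | Sum.inr (Sum.inr (Sum.inl a)) => simp [hz3 a]
      | Sum.inr (Sum.inr (Sum.inr u)) => simp [hz4]
    rw [wt, hsupp, Set.ncard_singleton]

/-- for `η ≥ 2` and `q ≤ max(δ/(η+1), δT)`, the minimum distance is
`max(q−δX+1,1)` when `δT ≥ 0` and `1` when `δT < 0`. -/
theorem statement17 (η : ℕ) (δT : ℤ) (δX : ℕ) (hη : 2 ≤ η)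
    (hδ : 0 ≤ δT + (η : ℤ) * (δX : ℤ))
    (hq : (Fintype.card F : ℚ) ≤
      max (((δT + (η : ℤ) * (δX : ℤ) : ℤ) : ℚ) / ((η : ℚ) + 1)) ((δT : ℚ))) :
    (dmin F η δT δX : ℤ) =
      if 0 ≤ δT then max ((Fintype.card F : ℤ) - δX + 1) 1 else 1 := by
  classical
  set q := Fintype.card F with hqdef
  have hq2 : 2 ≤ q := Fintype.one_lt_card
  rw [le_max_iff] at hq
  by_cases hqT : (q : ℤ) ≤ δT
  · -- large δT: construction A
    have h0δT : 0 ≤ δT := by omega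
    obtain ⟨v, hv, hvne, hwtv⟩ := constructionA (F := F) η δT δX hqT
    by_cases hXq : δX < q
    · have hmin : min δX q = δX := by omega
      rw [hmin] at hwtv
      have hd : dmin F η δT δX = q - δX + 1 := by
        apply le_antisymm
        · rw [← hwtv]; exact dmin_le hv hvne
        · apply dmin_ge hv hvne
          intro u hu hune
          have := wt_lower hu hune
          omega
      rw [hd, if_pos h0δT]
      push_cast [Nat.cast_sub (le_of_lt hXq)]
      omega
    · have hmin : min δX q = q := by omega
      rw [hmin] at hwtv
      have hwt1 : wt F v = 1 := by omega
      rw [dmin_eq_one hv hvne hwt1, if_pos h0δT]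
      push_cast
      omega
  · -- small δT: construction B
    have hbudQ : (q : ℚ) ≤ ((δT + (η : ℤ) * (δX : ℤ) : ℤ) : ℚ) / ((η : ℚ) + 1) := by
      rcases hq with h | h
      · exact h
      · exact absurd (by exact_mod_cast h) hqT
    have hbud : (q : ℤ) * ((η : ℤ) + 1) ≤ δT + (η : ℤ) * (δX : ℤ) := by
      have hpos : (0 : ℚ) < (η : ℚ) + 1 := by positivity
      rw [le_div_iff₀ hpos] at hbudQ
      exact_mod_cast hbudQ
    obtain ⟨v, hv, hvne, hwt1⟩ := constructionB (F := F) η δT δX hη (by omega) hbud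
    rw [dmin_eq_one hv hvne hwt1]
    by_cases h0δT : 0 ≤ δT
    · rw [if_pos h0δT]
      have hbud' : (η : ℤ) * q + q ≤ δT + (η : ℤ) * δX := by linear_combination hbud
      have h1 : (η : ℤ) * q < (η : ℤ) * δX := by omega
      have h2 : (q : ℤ) < (δX : ℤ) := lt_of_mul_lt_mul_left h1 (by positivity)
      omega
    · rw [if_neg h0δT]
      norm_num


end Hirz
end

section
/- Let η ≥ 0 and (δT,δX) ∈ ℤ×ℕ with δX ≥ 1 and 0 ≤ δ := δT+η·δX < q, and let ξ1,…,ξδ be pairwise distinct elements of 𝔽_q. Then the polynomial F = X1^{δX}·∏_{i=1}^{δ}(T2 − ξi·T1) belongs to R(δT,δX), vanishes at exactly δq+q+1 of the (q+1)² rational points of H_η, and hence the codeword ev_{(δT,δX)}(F) has Hamming weight exactly q(q−δ+1). -/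
open MvPolynomial

attribute [local instance] Classical.propDecidable

namespace Hirz

variable (F : Type) [Field F] [Fintype F]

/-! Auxiliary lemmas -/

lemma aux_ncard_sum {α β : Type*} [Finite α] [Finite β] (s : Set (α ⊕ β)) :
    s.ncard = (Sum.inl ⁻¹' s).ncard + (Sum.inr ⁻¹' s).ncard := by
  have hs : s = Sum.inl '' (Sum.inl ⁻¹' s) ∪ Sum.inr '' (Sum.inr ⁻¹' s) := by
    ext (x | x) <;> simp
  have hd : Disjoint (Sum.inl '' (Sum.inl ⁻¹' s)) (Sum.inr '' (Sum.inr ⁻¹' s)) := by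
    rw [Set.disjoint_left]
    rintro _ ⟨x, -, rfl⟩ ⟨y, -, h⟩
    exact absurd h (by simp)
  calc s.ncard = (Sum.inl '' (Sum.inl ⁻¹' s) ∪ Sum.inr '' (Sum.inr ⁻¹' s)).ncard := by rw [← hs]
    _ = _ := by
        rw [Set.ncard_union_eq hd (Set.toFinite _) (Set.toFinite _),
          Set.ncard_image_of_injective _ Sum.inl_injective,
          Set.ncard_image_of_injective _ Sum.inr_injective]

lemma aux_ncard_prod {α β : Type*} [Finite α] [Finite β] (s : Set α) (t : Set β) :
    (s ×ˢ t).ncard = s.ncard * t.ncard := by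
  rw [← Nat.card_coe_set_eq, ← Nat.card_coe_set_eq, ← Nat.card_coe_set_eq,
    Nat.card_congr (Equiv.Set.prod s t), Nat.card_prod]

lemma aux_mon_X_pow (n : ℕ) : mon F ![0, 0, n, 0] = (X 2 : MvPolynomial (Fin 4) F) ^ n := by
  have h : Finsupp.equivFunOnFinite.symm ![0, 0, n, 0] = Finsupp.single 2 n := by
    ext j
    fin_cases j <;> simp [Finsupp.single_apply]
  rw [X_pow_eq_monomial, mon, h]

/-- for `0 ≤ δ < q` and `δX ≥ 1`, the polynomial
`F0 = X1^δX · ∏ (T2 − ξ_i T1)` lies in `R(δT,δX)`, vanishes at exactly `δq+q+1`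
rational points, and its codeword has weight `q(q−δ+1)`. -/
theorem statement18 (η : ℕ) (δT : ℤ) (δX : ℕ) (hX : 1 ≤ δX)
    (hδ0 : 0 ≤ δT + (η : ℤ) * (δX : ℤ))
    (hδq : δT + (η : ℤ) * (δX : ℤ) < (Fintype.card F : ℤ))
    (ξ : Fin (δT + (η : ℤ) * (δX : ℤ)).toNat → F) (hξ : Function.Injective ξ) :
    let q := Fintype.card F
    let D := (δT + (η : ℤ) * (δX : ℤ)).toNat
    let F0 : MvPolynomial (Fin 4) F :=
      mon F ![0, 0, δX, 0] * ∏ i : Fin D, (X 1 - C (ξ i) * X 0)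
    F0 ∈ RSpan F η δT δX ∧
      {i : HIdx F | ev F F0 i = 0}.ncard = D * q + q + 1 ∧
      wt F (ev F F0) = q * (q - D + 1) := by
  intro q D F0
  have hD : (D : ℤ) = δT + (η : ℤ) * (δX : ℤ) := Int.toNat_of_nonneg hδ0
  have hDq : D < q := by exact_mod_cast hD ▸ hδq
  set G : MvPolynomial (Fin 4) F := ∏ i : Fin D, (X 1 - C (ξ i) * X 0) with hGdef
  -- homogeneity of G
  have hGhom : G.IsHomogeneous D := by
    have := IsHomogeneous.prod (Finset.univ : Finset (Fin D))
      (fun i => (X 1 - C (ξ i) * X 0 : MvPolynomial (Fin 4) F)) (fun _ => 1)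
      (fun i _ => (isHomogeneous_X F 1).sub (isHomogeneous_C_mul_X (ξ i) 0))
    simpa using this
  -- variables of G
  have hGvars : G.vars ⊆ {0, 1} := by
    refine (vars_prod _).trans ?_
    intro j hj
    simp only [Finset.mem_biUnion] at hj
    obtain ⟨i, -, hj⟩ := hj
    have h1 := vars_sub_subset (p := (X 1 : MvPolynomial (Fin 4) F)) (q := C (ξ i) * X 0) hj
    rw [Finset.mem_union] at h1
    rcases h1 with h1 | h1
    · rw [vars_X] at h1
      simp only [Finset.mem_singleton] at h1
      simp [h1]
    · have h2 := vars_mul (C (ξ i)) (X 0 : MvPolynomial (Fin 4) F) h1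
      rw [Finset.mem_union, vars_C, vars_X] at h2
      simp only [Finset.notMem_empty, false_or, Finset.mem_singleton] at h2
      simp [h2]
  have hGsupp : ∀ d ∈ G.support, d 2 = 0 ∧ d 3 = 0 := by
    intro d hd
    constructor
    all_goals by_contra h
    · exact absurd (hGvars ((mem_vars _).mpr ⟨d, hd, Finsupp.mem_support_iff.mpr h⟩)) (by decide)
    · exact absurd (hGvars ((mem_vars _).mpr ⟨d, hd, Finsupp.mem_support_iff.mpr h⟩)) (by decide)
  have hGdeg : ∀ d ∈ G.support, d 0 + d 1 = D := by
    intro d hd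
    obtain ⟨h2, h3⟩ := hGsupp d hd
    have hw : Finsupp.degree d = D := by
      rw [Finsupp.degree_eq_weight_one]
      exact hGhom (mem_support_iff.mp hd)
    have : Finsupp.degree d = ∑ i : Fin 4, d i := by
      rw [Finsupp.degree]
      exact Finset.sum_subset (Finset.subset_univ _)
        (fun x _ hx => Finsupp.notMem_support_iff.mp hx)
    rw [this, Fin.sum_univ_four, h2, h3] at hw
    omega
  -- membership in RSpan
  have hmem : F0 ∈ RSpan F η δT δX := by
    set e : Fin 4 →₀ ℕ := Finsupp.equivFunOnFinite.symm ![0, 0, δX, 0] with he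
    have hF0 : F0 = ∑ d ∈ G.support, monomial (e + d) (coeff d G) := by
      show mon F ![0, 0, δX, 0] * G = _
      conv_lhs => rw [mon, ← support_sum_monomial_coeff G, Finset.mul_sum]
      exact Finset.sum_congr rfl fun d hd => by rw [monomial_mul, one_mul]
    rw [hF0]
    refine Submodule.sum_mem _ fun d hd => ?_
    have hmon : monomial (e + d) (coeff d G) = (coeff d G) • mon F ⇑(e + d) := by
      rw [mon, show Finsupp.equivFunOnFinite.symm ⇑(e + d) = e + d from
        Finsupp.equivFunOnFinite.symm_apply_apply (e + d), smul_monomial, smul_eq_mul, mul_one]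
    rw [hmon]
    refine Submodule.smul_mem _ _ (Submodule.subset_span ⟨⇑(e + d), ?_, rfl⟩)
    have he0 : e 0 = 0 := rfl
    have he1 : e 1 = 0 := rfl
    have he2 : e 2 = δX := rfl
    have he3 : e 3 = 0 := rfl
    obtain ⟨h2, h3⟩ := hGsupp d hd
    have h01 := hGdeg d hd
    constructor
    · simp only [Finsupp.add_apply, he0, he1, he2, h2, zero_add, add_zero]
      push_cast
      omega
    · simp only [Finsupp.add_apply, he2, he3, h2, h3]
      omega
  -- explicit evaluation
  have hev : ∀ i, ev F F0 i = (pt F i 2) ^ δX * ∏ j : Fin D, (pt F i 1 - ξ j * pt F i 0) := by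
    intro i
    show eval (pt F i) (mon F ![0, 0, δX, 0] * G) = _
    rw [aux_mon_X_pow]
    simp [hGdef, eval_prod]
  have hev1 : ∀ a b : F, (ev F F0 (Sum.inl (a, b)) = 0 ↔ a ∈ Set.range ξ) := by
    intro a b
    rw [hev]
    have h2 : pt F (Sum.inl (a, b)) 2 = 1 := rfl
    have h1 : pt F (Sum.inl (a, b)) 1 = a := rfl
    have h0 : pt F (Sum.inl (a, b)) 0 = 1 := rfl
    rw [h0, h1, h2, one_pow, one_mul, Finset.prod_eq_zero_iff]
    simp only [mul_one]
    constructor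
    · rintro ⟨j, -, hj⟩
      exact ⟨j, (sub_eq_zero.mp hj).symm⟩
    · rintro ⟨j, rfl⟩
      exact ⟨j, Finset.mem_univ _, by simp [mul_one, sub_self]⟩
  have hev2 : ∀ b : F, ev F F0 (Sum.inr (Sum.inl b)) ≠ 0 := by
    intro b
    rw [hev]
    have h2 : pt F (Sum.inr (Sum.inl b)) 2 = 1 := rfl
    have h1 : pt F (Sum.inr (Sum.inl b)) 1 = 1 := rfl
    have h0 : pt F (Sum.inr (Sum.inl b)) 0 = 0 := rfl
    rw [h0, h1, h2]
    simp
  have hev3 : ∀ a : F, ev F F0 (Sum.inr (Sum.inr (Sum.inl a))) = 0 := by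
    intro a
    rw [hev]
    have h2 : pt F (Sum.inr (Sum.inr (Sum.inl a))) 2 = 0 := rfl
    rw [h2, zero_pow (by omega), zero_mul]
  have hev4 : ∀ u : Unit, ev F F0 (Sum.inr (Sum.inr (Sum.inr u))) = 0 := by
    intro u
    rw [hev]
    have h2 : pt F (Sum.inr (Sum.inr (Sum.inr u))) 2 = 0 := rfl
    rw [h2, zero_pow (by omega), zero_mul]
  have hrange : (Set.range ξ).ncard = D := by
    rw [← Set.image_univ, Set.ncard_image_of_injective _ hξ, Set.ncard_univ,
      Nat.card_eq_fintype_card, Fintype.card_fin]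
  have hunivF : (Set.univ : Set F).ncard = q := by
    rw [Set.ncard_univ, Nat.card_eq_fintype_card]
  -- zero count
  have hzero : {i : HIdx F | ev F F0 i = 0}.ncard = D * q + q + 1 := by
    rw [aux_ncard_sum, aux_ncard_sum, aux_ncard_sum]
    have e1 : (Sum.inl ⁻¹' {i : HIdx F | ev F F0 i = 0}) = Set.range ξ ×ˢ Set.univ := by
      ext ⟨a, b⟩
      simp [hev1 a b]
    have e2 : (Sum.inl ⁻¹' (Sum.inr ⁻¹' {i : HIdx F | ev F F0 i = 0})) = (∅ : Set F) := by
      ext b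
      simp [hev2 b]
    have e3 : (Sum.inl ⁻¹' (Sum.inr ⁻¹' (Sum.inr ⁻¹' {i : HIdx F | ev F F0 i = 0})))
        = (Set.univ : Set F) := by
      ext a
      simp [hev3 a]
    have e4 : (Sum.inr ⁻¹' (Sum.inr ⁻¹' (Sum.inr ⁻¹' {i : HIdx F | ev F F0 i = 0})))
        = (Set.univ : Set Unit) := by
      ext u
      simp [hev4 u]
    rw [e1, e2, e3, e4, aux_ncard_prod, hrange, hunivF, Set.ncard_empty, Set.ncard_univ,
      Nat.card_unique]
    omega
  refine ⟨hmem, hzero, ?_⟩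
  -- weight: count nonzero positions directly
  have hrc : (Set.range ξ)ᶜ.ncard = q - D := by
    have := Set.ncard_add_ncard_compl (Set.range ξ)
    rw [hrange, Nat.card_eq_fintype_card] at this
    omega
  rw [wt, aux_ncard_sum, aux_ncard_sum, aux_ncard_sum]
  have e1 : (Sum.inl ⁻¹' {i : HIdx F | ev F F0 i ≠ 0}) = (Set.range ξ)ᶜ ×ˢ Set.univ := by
    ext ⟨a, b⟩
    simp [hev1 a b]
  have e2 : (Sum.inl ⁻¹' (Sum.inr ⁻¹' {i : HIdx F | ev F F0 i ≠ 0})) = (Set.univ : Set F) := by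
    ext b
    simp [hev2 b]
  have e3 : (Sum.inl ⁻¹' (Sum.inr ⁻¹' (Sum.inr ⁻¹' {i : HIdx F | ev F F0 i ≠ 0})))
      = (∅ : Set F) := by
    ext a
    simp [hev3 a]
  have e4 : (Sum.inr ⁻¹' (Sum.inr ⁻¹' (Sum.inr ⁻¹' {i : HIdx F | ev F F0 i ≠ 0})))
      = (∅ : Set Unit) := by
    ext u
    simp [hev4 u]
  rw [e1, e2, e3, e4, aux_ncard_prod, hrc, hunivF, Set.ncard_empty, Set.ncard_empty]
  obtain ⟨k, hk⟩ : ∃ k, q - D = k := ⟨q - D, rfl⟩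
  rw [hk]
  ring

end Hirz
end

section
/- Let η ≥ 1, δT < 0 and δX > 0 with δ := δT+η·δX ≥ 0. Then every F ∈ R(δT,δX) vanishes at all q+1 rational points of the forms (1,a,0,1) (a ∈ 𝔽_q) and (0,1,0,1). Consequently, the punctured code C*_η(δT,δX), obtained from C_η(δT,δX) by deleting these q+1 coordinates, has length q(q+1), the same dimension as C_η(δT,δX), and the same minimum distance as C_η(δT,δX). -/
open MvPolynomial

attribute [local instance] Classical.propDecidable

namespace Hirz

variable (F : Type) [Field F] [Fintype F]

/-- for `η ≥ 1`, `δT < 0`, `δX > 0`, every polynomial of `R(δT,δX)`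
vanishes at the `q+1` points with `x1 = 0`; puncturing those coordinates yields a code
of length `q(q+1)` with the same dimension and the same minimum distance. -/
theorem statement19 (η : ℕ) (δT : ℤ) (δX : ℕ) (hη : 1 ≤ η)
    (hT : δT < 0) (hX : 0 < δX) (hδ : 0 ≤ δT + (η : ℤ) * (δX : ℤ)) :
    let ι : (F × F) ⊕ F → HIdx F :=
      Sum.elim (fun p => Sum.inl p) (fun b => Sum.inr (Sum.inl b))
    let CStar : Submodule F ((F × F) ⊕ F → F) :=
      Submodule.map (LinearMap.funLeft F F ι) (Code F η δT δX)
    (∀ P ∈ RSpan F η δT δX,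
        (∀ a : F, ev F P (Sum.inr (Sum.inr (Sum.inl a))) = 0) ∧
          ev F P (Sum.inr (Sum.inr (Sum.inr ()))) = 0) ∧
      Fintype.card ((F × F) ⊕ F) = Fintype.card F * (Fintype.card F + 1) ∧
      Module.finrank F CStar = Module.finrank F (Code F η δT δX) ∧
      sInf {w : ℕ | ∃ v ∈ CStar, v ≠ 0 ∧ {i | v i ≠ 0}.ncard = w} =
        dmin F η δT δX := by
  intro ι CStar
  have hι : Function.Injective ι := by
    intro a b h
    cases a <;> cases b <;> simpa [ι] using h
  -- vanishing of monomials at points with third coordinate zero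
  have hmon : ∀ (p : Fin 4 → F), p 2 = 0 → ∀ c : Fin 4 → ℕ, IsBideg η δT δX c →
      eval p (mon F c) = 0 := by
    intro p hp c hc
    have hc2 : c 2 ≠ 0 := by
      intro h0
      have := hc.1
      rw [h0] at this
      simp at this
      omega
    have : eval p (mon F c) = ∏ i, p i ^ c i := by
      rw [mon, eval_monomial, Finsupp.prod_fintype]
      · simp
      · intro i; exact pow_zero _
    rw [this]
    apply Finset.prod_eq_zero (Finset.mem_univ (2 : Fin 4))
    rw [hp, zero_pow hc2]
  -- vanishing of RSpan elements at such points
  have hRS : ∀ (p : Fin 4 → F), p 2 = 0 → ∀ P ∈ RSpan F η δT δX, eval p P = 0 := by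
    intro p hp P hP
    induction hP using Submodule.span_induction with
    | mem x hx => obtain ⟨c, hc, rfl⟩ := hx; exact hmon p hp c hc
    | zero => simp
    | add x y _ _ hx hy => simp [hx, hy]
    | smul a x _ hx => simp [hx]
  -- third coordinate of the corresponding points is zero
  have hpt : ∀ k : F ⊕ Unit, pt F (Sum.inr (Sum.inr k)) 2 = 0 := by
    rintro (a | ⟨⟩) <;> simp [pt]
  -- vanishing of Code elements at the corresponding coordinates
  have hCode : ∀ v ∈ Code F η δT δX, ∀ k : F ⊕ Unit, v (Sum.inr (Sum.inr k)) = 0 := by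
    intro v hv
    induction hv using Submodule.span_induction with
    | mem x hx =>
      obtain ⟨P, ⟨c, hc, rfl⟩, rfl⟩ := hx
      intro k
      exact hmon _ (hpt k) c hc
    | zero => simp
    | add x y _ _ hx hy => intro k; simp [hx k, hy k]
    | smul a x _ hx => intro k; simp [hx k]
  -- injectivity of puncturing on the code
  have hzero : ∀ v ∈ Code F η δT δX, (fun i => v (ι i)) = 0 → v = 0 := by
    intro v hv h
    funext j
    rcases j with p | b | k
    · exact congrFun h (Sum.inl p)
    · exact congrFun h (Sum.inr b)
    · exact hCode v hv _
  refine ⟨?_, ?_, ?_, ?_⟩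
  · intro P hP
    exact ⟨fun a => hRS _ (hpt (Sum.inl a)) P hP, hRS _ (hpt (Sum.inr ())) P hP⟩
  · simp [Fintype.card_sum, Fintype.card_prod]; ring
  · -- finrank
    let f : ↥(Code F η δT δX) →ₗ[F] ((F × F) ⊕ F → F) :=
      (LinearMap.funLeft F F ι).comp (Code F η δT δX).subtype
    have hfr : LinearMap.range f = CStar := by
      rw [LinearMap.range_comp, Submodule.range_subtype]
    have hfinj : Function.Injective f := by
      intro x y h
      have : ((x : HIdx F → F) - y) ∈ Code F η δT δX := sub_mem x.2 y.2
      have hz : (fun i => ((x : HIdx F → F) - y) (ι i)) = 0 := by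
        funext i
        have := congrFun (show (f x : ((F × F) ⊕ F → F)) = f y from h) i
        simp only [f, LinearMap.comp_apply, LinearMap.funLeft_apply,
          Submodule.subtype_apply] at this
        simp [this]
      have := hzero _ this hz
      exact Subtype.ext (by rwa [sub_eq_zero] at this)
    rw [← hfr]
    exact ((LinearEquiv.ofInjective f hfinj).finrank_eq).symm
  · -- min distance
    have hwt : ∀ v ∈ Code F η δT δX, {i | v (ι i) ≠ 0}.ncard = {j | v j ≠ 0}.ncard := by
      intro v hv
      have himg : ι '' {i | v (ι i) ≠ 0} = {j | v j ≠ 0} := by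
        ext j
        constructor
        · rintro ⟨i, hi, rfl⟩; exact hi
        · intro hj
          rcases j with p | b | k
          · exact ⟨Sum.inl p, hj, rfl⟩
          · exact ⟨Sum.inr b, hj, rfl⟩
          · exact absurd (hCode v hv k) hj
      rw [← himg, Set.ncard_image_of_injective _ hι]
    have hsets : {w : ℕ | ∃ v ∈ CStar, v ≠ 0 ∧ {i | v i ≠ 0}.ncard = w} =
        {w : ℕ | ∃ v ∈ Code F η δT δX, v ≠ 0 ∧ wt F v = w} := by
      ext w
      constructor
      · rintro ⟨v', hv', hne, rfl⟩
        obtain ⟨v, hv, rfl⟩ := hv'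
        refine ⟨v, hv, ?_, ?_⟩
        · rintro rfl; exact hne (by simp)
        · exact (hwt v hv).symm
      · rintro ⟨v, hv, hne, rfl⟩
        refine ⟨LinearMap.funLeft F F ι v, Submodule.mem_map_of_mem hv, ?_, ?_⟩
        · intro h
          exact hne (hzero v hv (by funext i; exact congrFun h i))
        · exact hwt v hv
    rw [hsets]
    rfl

end Hirz
end
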